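/- arXiv:2311.05151 — 9 statements merged into one kernel-verified Lean document; each statement's English description precedes it below -/
import Mathlib

section
/- Let X and Y be topological spaces satisfying condition (T), and let f : X → Y be a continuous map. Then the following are equivalent: (i) the assignment V ↦ f⁻¹(V) is a bijection from the set of clopen subsets of Y onto the set of clopen subsets of X; (ii) the induced map π₀(f) : π₀(X) → π₀(Y) on spaces of connected components is bijective; (iii) π₀(f) : π₀(X) → π₀(Y) is a homeomorphism. -/
open TopologicalSpace Set Function

/-- In a quasi-compact space in which the quasi-compact opens form a basis stable under
intersection, the connected component of a point is the intersection of all clopen sets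
containing it. -/
theorem connectedComponent_eq_sInter_clopen_of_condT
    {X : Type*} [TopologicalSpace X] [CompactSpace X]
    (hb : IsTopologicalBasis {U : Set X | IsOpen U ∧ IsCompact U})
    (hi : ∀ U V : Set X, IsOpen U → IsCompact U → IsOpen V → IsCompact V →
      IsCompact (U ∩ V)) (x : X) :
    connectedComponent x = ⋂₀ {C : Set X | IsClopen C ∧ x ∈ C} := by
  set Z := ⋂₀ {C : Set X | IsClopen C ∧ x ∈ C} with hZdef
  have hxZ : x ∈ Z := fun C hC => hC.2
  have hsub : ∀ {C : Set X}, IsClopen C → x ∈ C → Z ⊆ C :=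
    fun hC hx => sInter_subset_of_mem ⟨hC, hx⟩
  refine subset_antisymm
    (subset_sInter fun C hC => hC.1.connectedComponent_subset hC.2) ?_
  refine IsPreconnected.subset_connectedComponent ?_ hxZ
  -- A helper: disjoint compact and closed sets can be separated by a compact open.
  have shrink : ∀ (A B : Set X), IsCompact A → IsClosed B → A ∩ B = ∅ →
      ∃ W : Set X, IsOpen W ∧ IsCompact W ∧ A ⊆ W ∧ W ∩ B = ∅ := by
    intro A B hA hB hAB
    have hcover : A ⊆ ⋃ i : {W : Set X // (IsOpen W ∧ IsCompact W) ∧ W ⊆ Bᶜ}, (i : Set X) := by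
      intro a ha
      have haB : a ∈ Bᶜ := fun hmem => (eq_empty_iff_forall_notMem.mp hAB a) ⟨ha, hmem⟩
      obtain ⟨W, hW, haW, hWB⟩ := hb.exists_subset_of_mem_open haB hB.isOpen_compl
      exact mem_iUnion.mpr ⟨⟨W, hW, hWB⟩, haW⟩
    obtain ⟨t, ht⟩ := hA.elim_finite_subcover
      (fun i : {W : Set X // (IsOpen W ∧ IsCompact W) ∧ W ⊆ Bᶜ} => i.1)
      (fun i => i.2.1.1) hcover
    refine ⟨⋃ i ∈ t, (i : {W : Set X // (IsOpen W ∧ IsCompact W) ∧ W ⊆ Bᶜ}).1,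
      isOpen_biUnion fun i _ => i.2.1.1,
      t.finite_toSet.isCompact_biUnion fun i _ => i.2.1.2, ht, ?_⟩
    have hsubc : (⋃ i ∈ t, (i : {W : Set X // (IsOpen W ∧ IsCompact W) ∧ W ⊆ Bᶜ}).1) ⊆ Bᶜ :=
      iUnion₂_subset fun i _ => i.2.2
    exact eq_empty_iff_forall_notMem.mpr fun z hz => hsubc hz.1 hz.2
  -- Now prove preconnectedness of `Z`.
  intro u v hu hv huv ⟨z1, hz1⟩ ⟨z2, hz2⟩
  by_contra hne
  rw [not_nonempty_iff_eq_empty] at hne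
  have hZclosed : IsClosed Z := isClosed_sInter fun C hC => hC.1.1
  set A := Z ∩ u with hA
  set B := Z ∩ v with hB
  have hZuv : Z ∩ (u ∩ v) = ∅ := hne
  have hZAB : Z = A ∪ B := by
    rw [hA, hB, ← inter_union_distrib_left]
    exact (inter_eq_left.mpr huv).symm
  have hAeq : A = Z ∩ vᶜ := by
    apply subset_antisymm
    · rintro z ⟨hzZ, hzu⟩
      refine ⟨hzZ, fun hzv => ?_⟩
      exact (eq_empty_iff_forall_notMem.mp hZuv z) ⟨hzZ, hzu, hzv⟩
    · rintro z ⟨hzZ, hzv⟩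
      exact ⟨hzZ, (huv hzZ).resolve_right hzv⟩
  have hBeq : B = Z ∩ uᶜ := by
    apply subset_antisymm
    · rintro z ⟨hzZ, hzv⟩
      refine ⟨hzZ, fun hzu => ?_⟩
      exact (eq_empty_iff_forall_notMem.mp hZuv z) ⟨hzZ, hzu, hzv⟩
    · rintro z ⟨hzZ, hzu⟩
      exact ⟨hzZ, (huv hzZ).resolve_left hzu⟩
  have hAclosed : IsClosed A := hAeq ▸ hZclosed.inter hv.isClosed_compl
  have hBclosed : IsClosed B := hBeq ▸ hZclosed.inter hu.isClosed_compl
  have hABdisj : A ∩ B = ∅ := by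
    rw [eq_empty_iff_forall_notMem]
    rintro z ⟨⟨hzZ, hzu⟩, ⟨_, hzv⟩⟩
    exact (eq_empty_iff_forall_notMem.mp hZuv z) ⟨hzZ, hzu, hzv⟩
  obtain ⟨U', hU'o, hU'c, hAU', hU'B⟩ := shrink A B hAclosed.isCompact hBclosed hABdisj
  obtain ⟨V', hV'o, hV'c, hBV', hV'A⟩ := shrink B A hBclosed.isCompact hAclosed
    (by rw [inter_comm]; exact hABdisj)
  -- Find a clopen `C` containing `x` with `C ⊆ U' ∪ V'`.
  have hZUV' : Z ⊆ U' ∪ V' := by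
    rw [hZAB]; exact union_subset_union hAU' hBV'
  have hiInter : (⋂ i : {C : Set X // IsClopen C ∧ x ∈ C}, (i : Set X)) = Z := by
    ext z
    simp only [Set.mem_iInter, Subtype.forall, hZdef, Set.mem_sInter, Set.mem_setOf_eq]
  obtain ⟨t₁, ht₁⟩ := ((hU'o.union hV'o).isClosed_compl.isCompact).elim_finite_subfamily_closed
    (fun i : {C : Set X // IsClopen C ∧ x ∈ C} => (i : Set X)) (fun i => i.2.1.1)
    (by rw [hiInter, eq_empty_iff_forall_notMem]
        rintro z ⟨hz1', hz2'⟩; exact hz1' (hZUV' hz2'))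
  set C : Set X := ⋂ i ∈ t₁, (i : Set X) with hC
  have hCmem : ∀ c : X, c ∈ C ↔ ∀ i ∈ t₁, c ∈ (i : Set X) := by
    intro c; rw [hC]; exact Set.mem_iInter₂
  have hCclopen : IsClopen C := isClopen_biInter_finset fun i _ => i.2.1
  have hxC : x ∈ C := (hCmem x).mpr fun i _ => i.2.2
  have hCUV : C ⊆ U' ∪ V' := by
    intro c hc
    by_contra hcn
    exact (eq_empty_iff_forall_notMem.mp ht₁ c) ⟨hcn, Set.mem_iInter₂.mpr ((hCmem c).mp hc)⟩
  -- The overlap `C ∩ (U' ∩ V')` is compact open and misses `Z`; kill it with more clopens.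
  have hOo : IsOpen (C ∩ (U' ∩ V')) := hCclopen.2.inter (hU'o.inter hV'o)
  have hOc : IsCompact (C ∩ (U' ∩ V')) :=
    hi C (U' ∩ V') hCclopen.2 hCclopen.1.isCompact (hU'o.inter hV'o) (hi U' V' hU'o hU'c hV'o hV'c)
  have hOZ : (C ∩ (U' ∩ V')) ∩ (⋂ i : {C : Set X // IsClopen C ∧ x ∈ C}, (i : Set X)) = ∅ := by
    rw [hiInter, eq_empty_iff_forall_notMem]
    rintro z ⟨⟨_, hzU, hzV⟩, hzZ⟩
    rcases hZAB ▸ hzZ with hzA | hzB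
    · exact (eq_empty_iff_forall_notMem.mp hV'A z) ⟨hzV, hzA⟩
    · exact (eq_empty_iff_forall_notMem.mp hU'B z) ⟨hzU, hzB⟩
  obtain ⟨t₂, ht₂⟩ := hOc.elim_finite_subfamily_closed
    (fun i : {C : Set X // IsClopen C ∧ x ∈ C} => (i : Set X)) (fun i => i.2.1.1) hOZ
  set C₂ : Set X := C ∩ ⋂ i ∈ t₂, (i : Set X) with hC₂
  have hC₂clopen : IsClopen C₂ := hCclopen.inter (isClopen_biInter_finset fun i _ => i.2.1)
  have hxC₂ : x ∈ C₂ := ⟨hxC, mem_iInter₂.mpr fun i _ => i.2.2⟩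
  have hC₂UV : C₂ ⊆ U' ∪ V' := fun c hc => hCUV hc.1
  have hC₂overlap : C₂ ∩ (U' ∩ V') = ∅ := by
    rw [eq_empty_iff_forall_notMem]
    rintro c ⟨⟨hcC, hct₂⟩, hcU, hcV⟩
    exact (eq_empty_iff_forall_notMem.mp ht₂ c) ⟨⟨hcC, hcU, hcV⟩, hct₂⟩
  -- The two candidate clopens.
  have hDeq : C₂ ∩ U' = C₂ ∩ V'ᶜ := by
    apply subset_antisymm
    · rintro c ⟨hc, hcU⟩
      refine ⟨hc, fun hcV => ?_⟩
      exact (eq_empty_iff_forall_notMem.mp hC₂overlap c) ⟨hc, hcU, hcV⟩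
    · rintro c ⟨hc, hcV⟩
      exact ⟨hc, (hC₂UV hc).resolve_right hcV⟩
  have hEeq : C₂ ∩ V' = C₂ ∩ U'ᶜ := by
    apply subset_antisymm
    · rintro c ⟨hc, hcV⟩
      refine ⟨hc, fun hcU => ?_⟩
      exact (eq_empty_iff_forall_notMem.mp hC₂overlap c) ⟨hc, hcU, hcV⟩
    · rintro c ⟨hc, hcU⟩
      exact ⟨hc, (hC₂UV hc).resolve_left hcU⟩
  have hDclopen : IsClopen (C₂ ∩ U') :=
    ⟨hDeq ▸ hC₂clopen.1.inter hV'o.isClosed_compl, hC₂clopen.2.inter hU'o⟩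
  have hEclopen : IsClopen (C₂ ∩ V') :=
    ⟨hEeq ▸ hC₂clopen.1.inter hU'o.isClosed_compl, hC₂clopen.2.inter hV'o⟩
  -- Conclude.
  rcases hZAB ▸ hxZ with hxA | hxB
  · have hxD : x ∈ C₂ ∩ U' := ⟨hxC₂, hAU' hxA⟩
    have hZD : Z ⊆ C₂ ∩ U' := hsub hDclopen hxD
    have : z2 ∈ U' := (hZD (hZAB ▸ (Or.inr hz2) : z2 ∈ Z)).2
    exact (eq_empty_iff_forall_notMem.mp hU'B z2) ⟨this, hz2⟩
  · have hxE : x ∈ C₂ ∩ V' := ⟨hxC₂, hBV' hxB⟩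
    have hZE : Z ⊆ C₂ ∩ V' := hsub hEclopen hxE
    have : z1 ∈ V' := (hZE (hZAB ▸ (Or.inl hz1) : z1 ∈ Z)).2
    exact (eq_empty_iff_forall_notMem.mp hV'A z1) ⟨this, hz1⟩

/-- Separation of distinct connected components by a clopen set, under condition (T). -/
theorem exists_isClopen_of_connectedComponent_ne
    {X : Type*} [TopologicalSpace X] [CompactSpace X]
    (hb : IsTopologicalBasis {U : Set X | IsOpen U ∧ IsCompact U})
    (hi : ∀ U V : Set X, IsOpen U → IsCompact U → IsOpen V → IsCompact V →
      IsCompact (U ∩ V)) {x y : X}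
    (h : connectedComponent x ≠ connectedComponent y) :
    ∃ C : Set X, IsClopen C ∧ x ∈ C ∧ y ∉ C := by
  have hy : y ∉ connectedComponent x := fun hy => h (connectedComponent_eq hy)
  rw [connectedComponent_eq_sInter_clopen_of_condT hb hi x] at hy
  rw [mem_sInter] at hy
  push_neg at hy
  obtain ⟨C, ⟨hC, hxC⟩, hyC⟩ := hy
  exact ⟨C, hC, hxC, hyC⟩

theorem preimage_image_connectedComponents_mk
    {X : Type*} [TopologicalSpace X] {U : Set X} (hU : IsClopen U) :
    ConnectedComponents.mk ⁻¹' (ConnectedComponents.mk '' U) = U := by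
  ext x
  simp only [Set.mem_preimage, Set.mem_image]
  constructor
  · rintro ⟨u, hu, hux⟩
    rw [ConnectedComponents.coe_eq_coe] at hux
    have hx : x ∈ connectedComponent u := hux ▸ mem_connectedComponent
    exact hU.connectedComponent_subset hu hx
  · exact fun hx => ⟨x, hx, rfl⟩

theorem isClopen_image_connectedComponents_mk
    {X : Type*} [TopologicalSpace X] {U : Set X} (hU : IsClopen U) :
    IsClopen (ConnectedComponents.mk '' U) := by
  constructor
  · rw [← isOpen_compl_iff, ← ConnectedComponents.isQuotientMap_coe.isOpen_preimage,
      Set.preimage_compl, preimage_image_connectedComponents_mk hU]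
    exact hU.compl.2
  · rw [← ConnectedComponents.isQuotientMap_coe.isOpen_preimage,
      preimage_image_connectedComponents_mk hU]
    exact hU.2

/-- A subset of a topological space is *clopen* if it is both open and closed;
`Clopens X` is the type of clopen subsets. Condition (T) on a topological space `X`:
`X` is quasi-compact, the quasi-compact open subsets form a basis of the topology,
and the intersection of any two quasi-compact open subsets is quasi-compact. -/
theorem clopen_bijective_tfae_pi0_homeomorph
    {X Y : Type*} [TopologicalSpace X] [TopologicalSpace Y]
    [CompactSpace X] [CompactSpace Y]
    (hbX : IsTopologicalBasis {U : Set X | IsOpen U ∧ IsCompact U})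
    (hiX : ∀ U V : Set X, IsOpen U → IsCompact U → IsOpen V → IsCompact V →
      IsCompact (U ∩ V))
    (hbY : IsTopologicalBasis {U : Set Y | IsOpen U ∧ IsCompact U})
    (hiY : ∀ U V : Set Y, IsOpen U → IsCompact U → IsOpen V → IsCompact V →
      IsCompact (U ∩ V))
    {f : X → Y} (hf : Continuous f) :
    List.TFAE
      [ Function.Bijective (fun V : {V : Set Y // IsClopen V} =>
          (⟨f ⁻¹' V.1, V.2.preimage hf⟩ : {U : Set X // IsClopen U})),
        Function.Bijective hf.connectedComponentsMap,
        IsHomeomorph hf.connectedComponentsMap ] := by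
  have hmap : ∀ x : X, hf.connectedComponentsMap (ConnectedComponents.mk x)
      = ConnectedComponents.mk (f x) := fun x => rfl
  tfae_have 2 → 3 := by
    intro h2
    have hT2 : T2Space (ConnectedComponents Y) := by
      constructor
      intro a b hab
      obtain ⟨y1, rfl⟩ := ConnectedComponents.surjective_coe a
      obtain ⟨y2, rfl⟩ := ConnectedComponents.surjective_coe b
      have hne : connectedComponent y1 ≠ connectedComponent y2 :=
        ConnectedComponents.coe_ne_coe.mp hab
      obtain ⟨C, hC, hy1, hy2⟩ := exists_isClopen_of_connectedComponent_ne hbY hiY hne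
      refine ⟨ConnectedComponents.mk '' C, (ConnectedComponents.mk '' C)ᶜ,
        (isClopen_image_connectedComponents_mk hC).2,
        (isClopen_image_connectedComponents_mk hC).compl.2,
        ⟨y1, hy1, rfl⟩, ?_, disjoint_compl_right⟩
      intro hmem
      exact hy2 (by
        rw [← preimage_image_connectedComponents_mk hC]; exact hmem)
    haveI : CompactSpace (ConnectedComponents X) :=
      inferInstanceAs (CompactSpace (Quotient (connectedComponentSetoid X)))
    exact isHomeomorph_iff_continuous_bijective.mpr
      ⟨hf.connectedComponentsMap_continuous, h2⟩
  tfae_have 3 → 1 := by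
    intro h3
    constructor
    · -- injectivity of the clopen preimage map
      have key : ∀ (W W' : Set Y), IsClopen W → IsClopen W' →
          f ⁻¹' W = f ⁻¹' W' → W ⊆ W' := by
        intro W W' hW hW' hpre y hy
        obtain ⟨a, ha⟩ := h3.bijective.surjective (ConnectedComponents.mk y)
        obtain ⟨x, rfl⟩ := ConnectedComponents.surjective_coe a
        rw [hmap x] at ha
        have hcc : connectedComponent (f x) = connectedComponent y :=
          ConnectedComponents.coe_eq_coe.mp ha
        have hfx : f x ∈ W := hW.connectedComponent_subset hy (hcc ▸ mem_connectedComponent)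
        have hx : x ∈ f ⁻¹' W' := hpre ▸ hfx
        have : connectedComponent (f x) ⊆ W' := hW'.connectedComponent_subset hx
        exact this (hcc.symm ▸ mem_connectedComponent)
      rintro ⟨V, hV⟩ ⟨V', hV'⟩ h
      have hpre : f ⁻¹' V = f ⁻¹' V' := congrArg Subtype.val h
      exact Subtype.ext (subset_antisymm (key V V' hV hV' hpre) (key V' V hV' hV hpre.symm))
    · -- surjectivity of the clopen preimage map
      rintro ⟨U, hU⟩
      obtain ⟨e, he⟩ := isHomeomorph_iff_exists_homeomorph.mp h3
      have himg : IsClopen (hf.connectedComponentsMap '' (ConnectedComponents.mk '' U)) := by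
        rw [← he]
        exact ⟨e.isClosed_image.mpr (isClopen_image_connectedComponents_mk hU).1,
          e.isOpen_image.mpr (isClopen_image_connectedComponents_mk hU).2⟩
      refine ⟨⟨ConnectedComponents.mk ⁻¹'
          (hf.connectedComponentsMap '' (ConnectedComponents.mk '' U)),
        himg.preimage ConnectedComponents.continuous_coe⟩, Subtype.ext ?_⟩
      show f ⁻¹' _ = U
      ext x
      simp only [Set.mem_preimage]
      rw [← hmap x, h3.bijective.injective.mem_set_image]
      constructor
      · intro hx
        rw [← preimage_image_connectedComponents_mk hU]
        exact hx
      · exact fun hx => Set.mem_image_of_mem _ hx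
  tfae_have 1 → 2 := by
    intro h1
    constructor
    · -- injectivity of π₀(f)
      intro a b hab
      obtain ⟨x1, rfl⟩ := ConnectedComponents.surjective_coe a
      obtain ⟨x2, rfl⟩ := ConnectedComponents.surjective_coe b
      rw [hmap x1, hmap x2] at hab
      rw [ConnectedComponents.coe_eq_coe]
      by_contra hne
      obtain ⟨U, hU, hx1, hx2⟩ := exists_isClopen_of_connectedComponent_ne hbX hiX hne
      obtain ⟨⟨V, hV⟩, hUV⟩ := h1.surjective ⟨U, hU⟩
      have hUV' : f ⁻¹' V = U := congrArg Subtype.val hUV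
      have hfx1 : f x1 ∈ V := by rw [← hUV'] at hx1; exact hx1
      have hcc : connectedComponent (f x1) = connectedComponent (f x2) :=
        ConnectedComponents.coe_eq_coe.mp hab
      have hfx2 : f x2 ∈ V :=
        hV.connectedComponent_subset hfx1 (hcc ▸ mem_connectedComponent)
      rw [← hUV'] at hx2
      exact hx2 hfx2
    · -- surjectivity of π₀(f)
      intro b
      obtain ⟨y, rfl⟩ := ConnectedComponents.surjective_coe b
      have hnonind : Nonempty {V : Set Y // IsClopen V ∧ y ∈ V} :=
        ⟨⟨Set.univ, isClopen_univ, Set.mem_univ y⟩⟩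
      have hne : ∀ i : {V : Set Y // IsClopen V ∧ y ∈ V}, (f ⁻¹' i.1).Nonempty := by
        intro i
        by_contra h
        rw [Set.not_nonempty_iff_eq_empty] at h
        have heq : (⟨i.1, i.2.1⟩ : {V : Set Y // IsClopen V}) = ⟨∅, isClopen_empty⟩ :=
          h1.injective (Subtype.ext (by simp [h]))
        have : i.1 = (∅ : Set Y) := congrArg Subtype.val heq
        exact (Set.notMem_empty y) (this ▸ i.2.2)
      have hdir : Directed (· ⊇ ·) (fun i : {V : Set Y // IsClopen V ∧ y ∈ V} => f ⁻¹' i.1) :=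
        fun i j => ⟨⟨i.1 ∩ j.1, i.2.1.inter j.2.1, ⟨i.2.2, j.2.2⟩⟩,
          Set.preimage_mono Set.inter_subset_left, Set.preimage_mono Set.inter_subset_right⟩
      obtain ⟨x, hx⟩ := IsCompact.nonempty_iInter_of_directed_nonempty_isCompact_isClosed
        (fun i : {V : Set Y // IsClopen V ∧ y ∈ V} => f ⁻¹' i.1) hdir hne
        (fun i => (i.2.1.preimage hf).1.isCompact) (fun i => (i.2.1.preimage hf).1)
      have hfx : f x ∈ connectedComponent y := by
        rw [connectedComponent_eq_sInter_clopen_of_condT hbY hiY y]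
        intro C hC
        exact Set.mem_iInter.mp hx ⟨C, hC⟩
      exact ⟨ConnectedComponents.mk x, by
        rw [hmap x, ConnectedComponents.coe_eq_coe']; exact hfx⟩
  tfae_have 3 → 2 := fun h => h.bijective
  tfae_finish
end

section
/- Let f : X → Y be a continuous map between profinite spaces such that the assignment V ↦ f⁻¹(V) is a bijection from the set of clopen subsets of Y onto the set of clopen subsets of X. Then f is a homeomorphism. -/
/-- Let `f : X → Y` be a continuous map of profinite spaces (compact, Hausdorff,
totally disconnected) such that `V ↦ f ⁻¹' V` is a bijection from the clopen subsets
of `Y` onto the clopen subsets of `X`. Then `f` is a homeomorphism. -/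
theorem isHomeomorph_of_clopen_preimage_bijective
    {X Y : Type*} [TopologicalSpace X] [TopologicalSpace Y]
    [CompactSpace X] [T2Space X] [TotallyDisconnectedSpace X]
    [CompactSpace Y] [T2Space Y] [TotallyDisconnectedSpace Y]
    {f : X → Y} (hf : Continuous f)
    (h : Function.Bijective (fun V : {V : Set Y // IsClopen V} =>
      (⟨f ⁻¹' V.1, V.2.preimage hf⟩ : {U : Set X // IsClopen U}))) :
    IsHomeomorph f := by
  rw [isHomeomorph_iff_continuous_bijective]
  refine ⟨hf, ?_, ?_⟩
  · intro x₁ x₂ hx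
    by_contra hne
    obtain ⟨U, hU, hx₁, hx₂⟩ := exists_isClopen_of_totally_separated hne
    obtain ⟨⟨V, hV⟩, hVU⟩ := h.2 ⟨U, hU⟩
    have hVU' : f ⁻¹' V = U := congrArg Subtype.val hVU
    rw [← hVU'] at hx₁ hx₂
    exact hx₂ (by simpa [Set.mem_preimage, hx] using hx₁)
  · intro y
    by_contra hy
    push_neg at hy
    have hopen : IsOpen (Set.range f)ᶜ := (hf.isClosedMap.isClosed_range).isOpen_compl
    have hymem : y ∈ (Set.range f)ᶜ := by
      simp only [Set.mem_compl_iff, Set.mem_range]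
      push_neg
      exact fun x => fun hxy => hy x hxy
    obtain ⟨V, hV, hyV, hVsub⟩ := compact_exists_isClopen_in_isOpen hopen hymem
    have : (⟨V, hV⟩ : {V : Set Y // IsClopen V}) = ⟨∅, isClopen_empty⟩ := by
      apply h.1
      simp only [Subtype.mk.injEq, Set.preimage_empty]
      ext x
      simp only [Set.mem_preimage, Set.mem_empty_iff_false, iff_false]
      intro hxV
      exact hVsub hxV ⟨x, rfl⟩
    rw [Subtype.mk.injEq] at this
    rw [this] at hyV
    exact hyV
end

section
/- Let X be a topological space satisfying condition (T) and let p : X → π₀(X) be the quotient map onto the space of connected components. Then the assignment S ↦ p⁻¹(S) is an inclusion-preserving bijection from the set of closed subsets of π₀(X) onto the set of pro-clopen subsets of X, with inverse given by Z ↦ p(Z). -/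
open TopologicalSpace

/-- A subset `Z` of a topological space is *pro-clopen* if it is an intersection of a
(possibly empty or infinite) family of clopen subsets. -/
def IsProClopen {X : Type*} [TopologicalSpace X] (Z : Set X) : Prop :=
  ∃ S : Set (Set X), (∀ s ∈ S, IsClopen s) ∧ Z = ⋂₀ S

open Set

/-- In a space with a basis of compact opens, a compact set inside an open set can be
squeezed by a compact open set. -/
lemma exists_isCompact_isOpen_between {X : Type*} [TopologicalSpace X]
    (hb : IsTopologicalBasis {U : Set X | IsOpen U ∧ IsCompact U})
    {K O : Set X} (hK : IsCompact K) (hO : IsOpen O) (hKO : K ⊆ O) :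
    ∃ U : Set X, IsOpen U ∧ IsCompact U ∧ K ⊆ U ∧ U ⊆ O := by
  have hcov : K ⊆ ⋃ i : {U : Set X // (IsOpen U ∧ IsCompact U) ∧ U ⊆ O}, (i : Set X) := by
    intro x hx
    obtain ⟨U, hU, hxU, hUO⟩ := hb.exists_subset_of_mem_open (hKO hx) hO
    exact mem_iUnion.2 ⟨⟨U, hU, hUO⟩, hxU⟩
  obtain ⟨t, ht⟩ := hK.elim_finite_subcover _ (fun i => i.2.1.1) hcov
  refine ⟨⋃ i ∈ t, (i : Set X), isOpen_biUnion fun i _ => i.2.1.1, ?_, ht, ?_⟩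
  · exact t.finite_toSet.isCompact_biUnion fun i _ => i.2.1.2
  · exact iUnion₂_subset fun i _ => i.2.2

/-- The key lemma: under condition (T), the connected component of a point is the
intersection of all clopen sets containing it. -/
lemma connectedComponent_eq_iInter_isClopen_of_conditionT {X : Type*} [TopologicalSpace X]
    [CompactSpace X]
    (hb : IsTopologicalBasis {U : Set X | IsOpen U ∧ IsCompact U})
    (hi : ∀ U V : Set X, IsOpen U → IsCompact U → IsOpen V → IsCompact V →
      IsCompact (U ∩ V)) (x : X) :
    connectedComponent x = ⋂ Z : {Z : Set X // IsClopen Z ∧ x ∈ Z}, ↑Z := by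
  apply Subset.antisymm connectedComponent_subset_iInter_isClopen
  refine IsPreconnected.subset_connectedComponent ?_ (mem_iInter.2 fun Z => Z.2.2)
  have hcl : IsClosed (⋂ Z : {Z : Set X // IsClopen Z ∧ x ∈ Z}, (Z : Set X)) :=
    isClosed_iInter fun Z => Z.2.1.1
  rw [isPreconnected_iff_subset_of_fully_disjoint_closed hcl]
  intro a b ha hb' hab hdisj
  obtain ⟨U, hUo, hUc, haU, hUO⟩ :=
    exists_isCompact_isOpen_between hb ha.isCompact hb'.isOpen_compl hdisj.subset_compl_right
  obtain ⟨V, hVo, hVc, hbV, hVO⟩ :=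
    exists_isCompact_isOpen_between hb hb'.isCompact ha.isOpen_compl
      hdisj.symm.subset_compl_right
  -- first clopen neighborhood: contained in U ∪ V
  have H1 := (hUo.union hVo).isClosed_compl.isCompact.inter_iInter_nonempty
    (fun Z : {Z : Set X // IsClopen Z ∧ x ∈ Z} => (Z : Set X)) (fun Z => Z.2.1.1)
  rw [← not_disjoint_iff_nonempty_inter, imp_not_comm, not_forall] at H1
  obtain ⟨t₁, ht₁⟩ := H1 (disjoint_compl_left_iff_subset.2 <| hab.trans <|
    union_subset_union haU hbV)
  have hC₁ : (⋂ Z ∈ t₁, (Z : Set X)) ⊆ U ∪ V := by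
    rw [← disjoint_compl_left_iff_subset, disjoint_iff_inter_eq_empty,
      ← not_nonempty_iff_eq_empty]
    exact ht₁
  -- second clopen neighborhood: disjoint from U ∩ V
  have H2 := (hi U V hUo hUc hVo hVc).inter_iInter_nonempty
    (fun Z : {Z : Set X // IsClopen Z ∧ x ∈ Z} => (Z : Set X)) (fun Z => Z.2.1.1)
  rw [← not_disjoint_iff_nonempty_inter, imp_not_comm, not_forall] at H2
  have hdUV : Disjoint (U ∩ V) (⋂ Z : {Z : Set X // IsClopen Z ∧ x ∈ Z}, (Z : Set X)) := by
    rw [disjoint_left]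
    intro y hyUV hyT
    rcases hab hyT with hya | hyb
    · exact hVO hyUV.2 hya
    · exact hUO hyUV.1 hyb
  obtain ⟨t₂, ht₂⟩ := H2 hdUV
  have hC₂ : (U ∩ V) ∩ ⋂ Z ∈ t₂, (Z : Set X) = ∅ := by
    rw [← not_nonempty_iff_eq_empty]; exact ht₂
  set C : Set X := (⋂ Z ∈ t₁, (Z : Set X)) ∩ ⋂ Z ∈ t₂, (Z : Set X) with hCdef
  have hCclopen : IsClopen C :=
    (isClopen_biInter_finset fun Z _ => Z.2.1).inter (isClopen_biInter_finset fun Z _ => Z.2.1)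
  have hxC : x ∈ C :=
    ⟨mem_iInter₂.2 fun Z _ => Z.2.2, mem_iInter₂.2 fun Z _ => Z.2.2⟩
  have hCUV : C ⊆ U ∪ V := fun y hy => hC₁ hy.1
  have hCdisj : C ∩ (U ∩ V) = ∅ := by
    rw [← not_nonempty_iff_eq_empty]
    rintro ⟨y, hyC, hyUV⟩
    exact (by rw [← not_nonempty_iff_eq_empty] at hC₂; exact hC₂ ⟨y, hyUV, hyC.2⟩ :)
  -- C ∩ U and C ∩ V are clopen
  have hsplit : ∀ W W' : Set X, IsOpen W → IsOpen W' → W ∪ W' = U ∪ V → W ∩ W' = U ∩ V →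
      IsClopen (C ∩ W) := by
    intro W W' hWo hW'o hunion hinter
    refine ⟨?_, hCclopen.2.inter hWo⟩
    have : C ∩ W = C ∩ W'ᶜ := by
      apply Subset.antisymm
      · rintro y ⟨hyC, hyW⟩
        refine ⟨hyC, fun hyW' => ?_⟩
        have : y ∈ U ∩ V := by rw [← hinter]; exact ⟨hyW, hyW'⟩
        have : y ∈ C ∩ (U ∩ V) := ⟨hyC, this⟩
        rw [hCdisj] at this
        exact this
      · rintro y ⟨hyC, hyW'⟩
        refine ⟨hyC, ?_⟩
        have : y ∈ W ∪ W' := by rw [hunion]; exact hCUV hyC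
        rcases this with h | h
        · exact h
        · exact absurd h hyW'
    rw [this]
    exact hCclopen.1.inter hW'o.isClosed_compl
  have key : ∀ y ∈ (⋂ Z : {Z : Set X // IsClopen Z ∧ x ∈ Z}, (Z : Set X)), y ∈ C := by
    intro y hy
    exact ⟨mem_iInter₂.2 fun Z hZ => mem_iInter.1 hy Z, mem_iInter₂.2 fun Z hZ => mem_iInter.1 hy Z⟩
  have hxT : x ∈ ⋂ Z : {Z : Set X // IsClopen Z ∧ x ∈ Z}, (Z : Set X) :=
    mem_iInter.2 fun Z => Z.2.2
  by_cases hxU : x ∈ U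
  · left
    have hDclopen : IsClopen (C ∩ U) := hsplit U V hUo hVo rfl rfl
    have hTD : (⋂ Z : {Z : Set X // IsClopen Z ∧ x ∈ Z}, (Z : Set X)) ⊆ C ∩ U :=
      iInter_subset (fun Z : {Z : Set X // IsClopen Z ∧ x ∈ Z} => (Z : Set X))
        ⟨C ∩ U, hDclopen, hxC, hxU⟩
    intro y hy
    rcases hab hy with hya | hyb
    · exact hya
    · exact absurd hyb (hUO (hTD hy).2)
  · right
    have hxV : x ∈ V := by
      rcases hCUV hxC with h | h
      · exact absurd h hxU
      · exact h
    have hDclopen : IsClopen (C ∩ V) := by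
      refine hsplit V U hVo hUo (union_comm V U) (inter_comm V U)
    have hTD : (⋂ Z : {Z : Set X // IsClopen Z ∧ x ∈ Z}, (Z : Set X)) ⊆ C ∩ V :=
      iInter_subset (fun Z : {Z : Set X // IsClopen Z ∧ x ∈ Z} => (Z : Set X))
        ⟨C ∩ V, hDclopen, hxC, hxV⟩
    intro y hy
    rcases hab hy with hya | hyb
    · exact absurd hya (hVO (hTD hy).2)
    · exact hyb

/-- Let `X` satisfy condition (T) (quasi-compact, quasi-compact opens form a basis and
are stable under binary intersection), and let `p : X → π₀(X)` be the quotient map onto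
the space of connected components. Then `S ↦ p ⁻¹' S` is an inclusion-preserving
bijection from the closed subsets of `π₀(X)` onto the pro-clopen subsets of `X`, with
inverse `Z ↦ p '' Z`. -/
theorem preimage_bijection_closed_proClopen
    {X : Type*} [TopologicalSpace X] [CompactSpace X]
    (hb : IsTopologicalBasis {U : Set X | IsOpen U ∧ IsCompact U})
    (hi : ∀ U V : Set X, IsOpen U → IsCompact U → IsOpen V → IsCompact V →
      IsCompact (U ∩ V)) :
    (∀ S : Set (ConnectedComponents X), IsClosed S →
        IsProClopen (ConnectedComponents.mk ⁻¹' S)) ∧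
    (∀ S T : Set (ConnectedComponents X), IsClosed S → IsClosed T →
        (ConnectedComponents.mk ⁻¹' S ⊆ ConnectedComponents.mk ⁻¹' T ↔ S ⊆ T)) ∧
    (∀ S : Set (ConnectedComponents X), IsClosed S →
        ConnectedComponents.mk '' (ConnectedComponents.mk ⁻¹' S) = S) ∧
    (∀ Z : Set X, IsProClopen Z →
        IsClosed (ConnectedComponents.mk '' Z) ∧
        ConnectedComponents.mk ⁻¹' (ConnectedComponents.mk '' Z) = Z) := by
  have hsat : ∀ Z : Set X, IsProClopen Z →
      ConnectedComponents.mk ⁻¹' (ConnectedComponents.mk '' Z) = Z := by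
    rintro Z ⟨S, hS, rfl⟩
    apply Subset.antisymm _ (subset_preimage_image _ _)
    rintro y hy
    obtain ⟨z, hz, hzy⟩ := hy
    have hcomp : connectedComponent z = connectedComponent y :=
      ConnectedComponents.coe_eq_coe.1 hzy
    intro C hC
    have hzC : connectedComponent z ⊆ C := (hS C hC).connectedComponent_subset (hz C hC)
    rw [hcomp] at hzC
    exact hzC mem_connectedComponent
  refine ⟨?_, ?_, ?_, ?_⟩
  · -- preimage of closed is pro-clopen
    intro S hS
    set F : Set X := ConnectedComponents.mk ⁻¹' S with hFdef
    refine ⟨{C | IsClopen C ∧ F ⊆ C}, fun s hs => hs.1, ?_⟩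
    apply Subset.antisymm (subset_sInter fun C hC => hC.2)
    intro y hy
    by_contra hyF
    have hFclosed : IsClosed F := hS.preimage ConnectedComponents.continuous_coe
    have hdisj : Disjoint F (connectedComponent y) := by
      rw [disjoint_left]
      intro z hzF hzy
      apply hyF
      have : connectedComponent z = connectedComponent y := (connectedComponent_eq hzy).symm
      have hm : (ConnectedComponents.mk z : ConnectedComponents X) = ConnectedComponents.mk y :=
        ConnectedComponents.coe_eq_coe.2 this
      show ConnectedComponents.mk y ∈ S
      rw [← hm]
      exact hzF
    have H := hFclosed.isCompact.inter_iInter_nonempty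
      (fun Z : {Z : Set X // IsClopen Z ∧ y ∈ Z} => (Z : Set X)) (fun Z => Z.2.1.1)
    rw [← not_disjoint_iff_nonempty_inter, imp_not_comm, not_forall] at H
    obtain ⟨t, ht⟩ := H (by
      rw [← connectedComponent_eq_iInter_isClopen_of_conditionT hb hi y]
      exact hdisj)
    have hFD : F ∩ ⋂ Z ∈ t, (Z : Set X) = ∅ := by
      rw [← not_nonempty_iff_eq_empty]; exact ht
    set D : Set X := ⋂ Z ∈ t, (Z : Set X) with hDdef
    have hDclopen : IsClopen D := isClopen_biInter_finset fun Z _ => Z.2.1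
    have hyD : y ∈ D := mem_iInter₂.2 fun Z _ => Z.2.2
    have hFDc : F ⊆ Dᶜ := by
      intro z hz hzD
      have : z ∈ F ∩ D := ⟨hz, hzD⟩
      rw [hFD] at this
      exact this
    exact hy Dᶜ ⟨hDclopen.compl, hFDc⟩ hyD
  · -- inclusion-preserving
    intro S T _ _
    exact ConnectedComponents.surjective_coe.preimage_subset_preimage_iff
  · -- image of preimage
    intro S _
    exact image_preimage_eq S ConnectedComponents.surjective_coe
  · -- pro-clopen: image closed and saturation
    intro Z hZ
    refine ⟨?_, hsat Z hZ⟩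
    rw [← ConnectedComponents.isQuotientMap_coe.isClosed_preimage, hsat Z hZ]
    obtain ⟨S, hS, rfl⟩ := hZ
    exact isClosed_sInter fun C hC => (hS C hC).1
end

section
/- Let X be a topological space satisfying condition (T) and let p : X → π₀(X) be the quotient map onto the space of connected components. Then the assignment S ↦ p⁻¹(S) is an inclusion-preserving bijection from the set of clopen subsets of π₀(X) onto the set of clopen subsets of X, with inverse given by Z ↦ p(Z). -/
open TopologicalSpace

/-- Let `X` satisfy condition (T) (quasi-compact, quasi-compact opens form a basis and
are stable under binary intersection), and let `p : X → π₀(X)` be the quotient map onto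
the space of connected components. Then `S ↦ p ⁻¹' S` is an inclusion-preserving
bijection from the clopen subsets of `π₀(X)` onto the clopen subsets of `X`, with
inverse `Z ↦ p '' Z`. -/
theorem preimage_bijection_clopen
    {X : Type*} [TopologicalSpace X] [CompactSpace X]
    (hb : IsTopologicalBasis {U : Set X | IsOpen U ∧ IsCompact U})
    (hi : ∀ U V : Set X, IsOpen U → IsCompact U → IsOpen V → IsCompact V →
      IsCompact (U ∩ V)) :
    (∀ S : Set (ConnectedComponents X), IsClopen S →
        IsClopen (ConnectedComponents.mk ⁻¹' S)) ∧
    (∀ S T : Set (ConnectedComponents X), IsClopen S → IsClopen T →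
        (ConnectedComponents.mk ⁻¹' S ⊆ ConnectedComponents.mk ⁻¹' T ↔ S ⊆ T)) ∧
    (∀ S : Set (ConnectedComponents X), IsClopen S →
        ConnectedComponents.mk '' (ConnectedComponents.mk ⁻¹' S) = S) ∧
    (∀ Z : Set X, IsClopen Z →
        IsClopen (ConnectedComponents.mk '' Z) ∧
        ConnectedComponents.mk ⁻¹' (ConnectedComponents.mk '' Z) = Z) := by
  have hsat : ∀ Z : Set X, IsClopen Z →
      ConnectedComponents.mk ⁻¹' (ConnectedComponents.mk '' Z) = Z := by
    intro Z hZ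
    rw [connectedComponents_preimage_image]
    apply Set.eq_of_subset_of_subset
    · exact Set.iUnion₂_subset fun x hx =>
        hZ.connectedComponent_subset hx
    · exact fun x hx => Set.mem_biUnion hx mem_connectedComponent
  refine ⟨fun S hS => hS.preimage ConnectedComponents.continuous_coe,
    fun S T _ _ => ⟨fun h s hs => ?_, fun h => Set.preimage_mono h⟩,
    fun S _ => Set.image_preimage_eq S ConnectedComponents.surjective_coe,
    fun Z hZ => ⟨?_, hsat Z hZ⟩⟩
  · obtain ⟨x, rfl⟩ := ConnectedComponents.surjective_coe s
    exact h hs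
  · rw [← ConnectedComponents.isQuotientMap_coe.isClopen_preimage, hsat Z hZ]
    exact hZ
end

section
/- Let X be a topological space satisfying condition (T). Then a nonempty subset Z of X is a minimal element of the set of nonempty pro-clopen subsets of X (ordered by inclusion) if and only if Z is a connected component of X. -/
open TopologicalSpace

section Aux

variable {X : Type*} [TopologicalSpace X] [CompactSpace X]

/-- Separation by a finite union of quasi-compact opens. -/
lemma exists_qcOpen_sep (hb : IsTopologicalBasis {U : Set X | IsOpen U ∧ IsCompact U})
    {A C : Set X} (hA : IsClosed A) (hC : IsClosed C) (hd : A ∩ C = ∅) :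
    ∃ F : Set (Set X), F.Finite ∧ (∀ f ∈ F, IsOpen f ∧ IsCompact f) ∧
      A ⊆ ⋃₀ F ∧ ⋃₀ F ∩ C = ∅ := by
  have hAc : IsCompact A := hA.isCompact
  have hcover : A ⊆ ⋃ U ∈ {U : Set X | (IsOpen U ∧ IsCompact U) ∧ U ⊆ Cᶜ}, U := by
    intro a ha
    have haC : a ∈ Cᶜ := fun h => (Set.eq_empty_iff_forall_notMem.1 hd a) ⟨ha, h⟩
    obtain ⟨v, hv, hav, hvsub⟩ := hb.exists_subset_of_mem_open haC hC.isOpen_compl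
    exact Set.mem_biUnion ⟨hv, hvsub⟩ hav
  obtain ⟨F, hFsub, hFfin, hFcov⟩ := hAc.elim_finite_subcover_image
    (fun U hU => hU.1.1) hcover
  refine ⟨F, hFfin, fun f hf => (hFsub hf).1, ?_, ?_⟩
  · simpa [Set.sUnion_eq_biUnion] using hFcov
  · apply Set.eq_empty_iff_forall_notMem.2
    rintro y ⟨⟨f, hf, hyf⟩, hyC⟩
    exact (hFsub hf).2 hyf hyC

lemma isCompact_sUnion_inter
    (hi : ∀ U V : Set X, IsOpen U → IsCompact U → IsOpen V → IsCompact V →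
      IsCompact (U ∩ V))
    {F G : Set (Set X)} (hF : F.Finite) (hG : G.Finite)
    (hFp : ∀ f ∈ F, IsOpen f ∧ IsCompact f) (hGp : ∀ g ∈ G, IsOpen g ∧ IsCompact g) :
    IsCompact (⋃₀ F ∩ ⋃₀ G) := by
  have : ⋃₀ F ∩ ⋃₀ G = ⋃ p ∈ F ×ˢ G, (p.1 ∩ p.2 : Set X) := by
    ext y
    simp only [Set.mem_inter_iff, Set.mem_sUnion, Set.mem_iUnion, Set.mem_prod]
    constructor
    · rintro ⟨⟨f, hf, hyf⟩, ⟨g, hg, hyg⟩⟩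
      exact ⟨(f, g), ⟨hf, hg⟩, hyf, hyg⟩
    · rintro ⟨⟨f, g⟩, ⟨hf, hg⟩, hyf, hyg⟩
      exact ⟨⟨f, hf, hyf⟩, ⟨g, hg, hyg⟩⟩
  rw [this]
  exact (hF.prod hG).isCompact_biUnion (fun p hp =>
    hi p.1 p.2 (hFp p.1 hp.1).1 (hFp p.1 hp.1).2 (hGp p.2 hp.2).1 (hGp p.2 hp.2).2)

/-- In a space satisfying condition (T), the quasi-component of `x` equals
the connected component of `x`. -/
lemma quasiComponent_eq_connectedComponent
    (hb : IsTopologicalBasis {U : Set X | IsOpen U ∧ IsCompact U})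
    (hi : ∀ U V : Set X, IsOpen U → IsCompact U → IsOpen V → IsCompact V →
      IsCompact (U ∩ V)) (x : X) :
    ⋂₀ {Z : Set X | IsClopen Z ∧ x ∈ Z} = connectedComponent x := by
  classical
  set W : Set (Set X) := {Z : Set X | IsClopen Z ∧ x ∈ Z} with hW
  set T : Set X := ⋂₀ W with hT
  have hxT : x ∈ T := fun Z hZ => hZ.2
  have hTiInter : T = ⋂ i : {Z : Set X // IsClopen Z ∧ x ∈ Z}, (i : Set X) := by
    ext y; simp [hT, hW, Set.mem_sInter, Set.mem_iInter, Subtype.forall]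
  have hTclosed : IsClosed T := isClosed_sInter (fun Z hZ => hZ.1.isClosed)
  -- the key step: any clopen-in-`T` splitting with `x` side yields containment
  have key : ∀ u v : Set X, IsClosed u → IsClosed v → T ⊆ u ∪ v →
      T ∩ (u ∩ v) = ∅ → x ∈ u → T ⊆ u := by
    intro u v hu hv hcov hdisj hxu
    set A : Set X := T ∩ u with hA
    set B : Set X := T ∩ v with hB
    have hAclosed : IsClosed A := hTclosed.inter hu
    have hBclosed : IsClosed B := hTclosed.inter hv
    have hAB : A ∩ B = ∅ := by
      apply Set.eq_empty_iff_forall_notMem.2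
      rintro y ⟨⟨hyT, hyu⟩, _, hyv⟩
      exact (Set.eq_empty_iff_forall_notMem.1 hdisj y) ⟨hyT, hyu, hyv⟩
    have hBA : B ∩ A = ∅ := by rw [Set.inter_comm]; exact hAB
    obtain ⟨F, hFfin, hFp, hAU, hUB⟩ := exists_qcOpen_sep hb hAclosed hBclosed hAB
    obtain ⟨G, hGfin, hGp, hBV, hVA⟩ := exists_qcOpen_sep hb hBclosed hAclosed hBA
    set U : Set X := ⋃₀ F with hU
    set V : Set X := ⋃₀ G with hV
    have hUopen : IsOpen U := isOpen_sUnion (fun f hf => (hFp f hf).1)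
    have hVopen : IsOpen V := isOpen_sUnion (fun g hg => (hGp g hg).1)
    have hUV : IsCompact (U ∩ V) := isCompact_sUnion_inter hi hFfin hGfin hFp hGp
    have hTcov : T ⊆ U ∪ V := by
      intro y hy
      rcases hcov hy with hyu | hyv
      · exact Or.inl (hAU ⟨hy, hyu⟩)
      · exact Or.inr (hBV ⟨hy, hyv⟩)
    have hTUV : T ∩ (U ∩ V) = ∅ := by
      apply Set.eq_empty_iff_forall_notMem.2
      rintro y ⟨hyT, hyU, hyV⟩
      rcases hcov hyT with hyu | hyv
      · exact (Set.eq_empty_iff_forall_notMem.1 hVA y) ⟨hyV, hyT, hyu⟩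
      · exact (Set.eq_empty_iff_forall_notMem.1 hUB y) ⟨hyU, hyT, hyv⟩
    -- find a finite intersection of clopens `Z₁ ⊆ U ∪ V` using compactness of `(U ∪ V)ᶜ`
    have hcompl : IsCompact ((U ∪ V)ᶜ) := ((hUopen.union hVopen).isClosed_compl).isCompact
    have h1 : (U ∪ V)ᶜ ∩ ⋂ i : {Z : Set X // IsClopen Z ∧ x ∈ Z}, (i : Set X) = ∅ := by
      rw [← hTiInter]
      apply Set.eq_empty_iff_forall_notMem.2
      rintro y ⟨hyc, hyT⟩
      exact hyc (hTcov hyT)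
    obtain ⟨t1, ht1⟩ := hcompl.elim_finite_subfamily_closed _
      (fun i => i.2.1.isClosed) h1
    have h2 : (U ∩ V) ∩ ⋂ i : {Z : Set X // IsClopen Z ∧ x ∈ Z}, (i : Set X) = ∅ := by
      rw [← hTiInter, Set.inter_comm]; exact hTUV
    obtain ⟨t2, ht2⟩ := hUV.elim_finite_subfamily_closed _
      (fun i => i.2.1.isClosed) h2
    set Z : Set X := ⋂ i ∈ (t1 ∪ t2 : Finset {Z : Set X // IsClopen Z ∧ x ∈ Z}), (i : Set X)
      with hZdef
    have hZclopen : IsClopen Z :=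
      isClopen_biInter_finset (fun i _ => i.2.1)
    have hxZ : x ∈ Z := Set.mem_iInter₂.2 (fun i _ => i.2.2)
    have hZsub : Z ⊆ U ∪ V := by
      intro y hy
      by_contra hyc
      refine (Set.eq_empty_iff_forall_notMem.1 ht1 y) ⟨hyc, ?_⟩
      exact Set.mem_iInter₂.2 fun i hi' =>
        Set.mem_iInter₂.1 hy i (Finset.mem_union_left _ hi')
    have hZUV : Z ∩ (U ∩ V) = ∅ := by
      apply Set.eq_empty_iff_forall_notMem.2
      rintro y ⟨hyZ, hyUV⟩
      refine (Set.eq_empty_iff_forall_notMem.1 ht2 y) ⟨hyUV, ?_⟩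
      exact Set.mem_iInter₂.2 fun i hi' =>
        Set.mem_iInter₂.1 hyZ i (Finset.mem_union_right _ hi')
    -- `Z ∩ U` is clopen and contains `x`
    have hZU_clopen : IsClopen (Z ∩ U) := by
      constructor
      · -- closed: Z ∩ U = Z ∩ Vᶜ
        have : Z ∩ U = Z ∩ Vᶜ := by
          ext y
          constructor
          · rintro ⟨hyZ, hyU⟩
            refine ⟨hyZ, fun hyV => ?_⟩
            exact (Set.eq_empty_iff_forall_notMem.1 hZUV y) ⟨hyZ, hyU, hyV⟩
          · rintro ⟨hyZ, hyV⟩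
            rcases hZsub hyZ with h | h
            · exact ⟨hyZ, h⟩
            · exact absurd h hyV
        rw [this]
        exact hZclopen.isClosed.inter hVopen.isClosed_compl
      · exact hZclopen.isOpen.inter hUopen
    have hxZU : x ∈ Z ∩ U := ⟨hxZ, hAU ⟨hxT, hxu⟩⟩
    have hTsub : T ⊆ Z ∩ U := Set.sInter_subset_of_mem ⟨hZU_clopen, hxZU⟩
    -- conclude `B = ∅`, so `T ⊆ u`
    intro y hy
    rcases hcov hy with h | h
    · exact h
    · exfalso
      have hyU : y ∈ U := (hTsub hy).2
      exact (Set.eq_empty_iff_forall_notMem.1 hUB y) ⟨hyU, hy, h⟩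
  -- now: `T` is preconnected
  have hTpre : IsPreconnected T := by
    rw [isPreconnected_iff_subset_of_disjoint_closed]
    intro u v hu hv hcov hdisj
    rcases hcov hxT with hxu | hxv
    · exact Or.inl (key u v hu hv hcov hdisj hxu)
    · refine Or.inr (key v u hv hu ?_ ?_ hxv)
      · rwa [Set.union_comm]
      · rwa [Set.inter_comm v u]
  apply Set.Subset.antisymm
  · exact hTpre.subset_connectedComponent hxT
  · intro y hy
    rw [hTiInter]
    exact connectedComponent_subset_iInter_isClopen hy

end Aux

/-- Let `X` satisfy condition (T) (quasi-compact, quasi-compact opens form a basis and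
are stable under binary intersection). A nonempty subset `Z ⊆ X` is a minimal element
of the set of nonempty pro-clopen subsets of `X` (ordered by inclusion) if and only if
`Z` is a connected component of `X`. -/



theorem minimal_nonempty_proClopen_iff_connectedComponent
    {X : Type*} [TopologicalSpace X] [CompactSpace X]
    (hb : IsTopologicalBasis {U : Set X | IsOpen U ∧ IsCompact U})
    (hi : ∀ U V : Set X, IsOpen U → IsCompact U → IsOpen V → IsCompact V →
      IsCompact (U ∩ V))
    (Z : Set X) (hZ : Z.Nonempty) :
    Minimal (fun W : Set X => W.Nonempty ∧ IsProClopen W) Z ↔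
      ∃ x : X, Z = connectedComponent x := by
  constructor
  · rintro ⟨⟨hne, S, hS, hZeq⟩, hmin⟩
    obtain ⟨x, hx⟩ := hne
    refine ⟨x, ?_⟩
    have hQsub : ⋂₀ {W : Set X | IsClopen W ∧ x ∈ W} ⊆ Z := by
      rw [hZeq]
      intro y hy s hs
      exact hy s ⟨hS s hs, (hZeq ▸ hx) s hs⟩
    have hQprop : (⋂₀ {W : Set X | IsClopen W ∧ x ∈ W}).Nonempty ∧
        IsProClopen (⋂₀ {W : Set X | IsClopen W ∧ x ∈ W}) :=
      ⟨⟨x, fun W hW => hW.2⟩, ⟨_, fun s hs => hs.1, rfl⟩⟩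
    have hle := hmin hQprop hQsub
    have hZQ : Z = ⋂₀ {W : Set X | IsClopen W ∧ x ∈ W} :=
      le_antisymm hle hQsub
    rw [hZQ, quasiComponent_eq_connectedComponent hb hi x]
  · rintro ⟨x, rfl⟩
    have hQ := quasiComponent_eq_connectedComponent hb hi x
    refine ⟨⟨hZ, ⟨_, fun s hs => hs.1, hQ.symm⟩⟩, ?_⟩
    rintro W ⟨⟨y, hy⟩, S, hS, hWeq⟩ hWZ
    have hQy : ⋂₀ {V : Set X | IsClopen V ∧ y ∈ V} ⊆ W := by
      rw [hWeq]
      intro z hz s hs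
      exact hz s ⟨hS s hs, (hWeq ▸ hy) s hs⟩
    have hyx : connectedComponent y = connectedComponent x :=
      (connectedComponent_eq (hWZ hy)).symm
    calc connectedComponent x = connectedComponent y := hyx.symm
      _ = ⋂₀ {V : Set X | IsClopen V ∧ y ∈ V} :=
        (quasiComponent_eq_connectedComponent hb hi y).symm
      _ ⊆ W := hQy
end

section
/- Let M be an additive abelian group, let B be a commutative ring with an M-grading B = ⊕_{m∈M} B_m, and let I ⊆ B be a homogeneous ideal such that I₀ := I ∩ B₀ is contained in the Jacobson radical of the subring B₀. If E is a finitely generated M-graded B-module with I·E = E (equivalently, E ⊗_B B/I = 0), then E = 0. -/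
/-!
Take a finite generating set of homogeneous elements and discard its elements one at a time.
If `e` has degree `d` and the remaining elements span `N`, then `I • E = E` gives
`e = a • e + n` with `a ∈ I` and `n ∈ N`. Since `N` is spanned by homogeneous elements it is a
homogeneous submodule, so the degree-`d` component of this equation gives `(1 - a₀) • e ∈ N`.
Here `1 - a₀` is a unit because `a₀ ∈ I₀` lies in the Jacobson radical of `B₀`, so `e ∈ N`.
In the end the empty set spans `E`.
-/

open DirectSum SetLike Submodule

section Decomposition

variable {ι A E σA σE : Type*} [DecidableEq ι] [Semiring A] [AddCommMonoid E] [Module A E]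
  [SetLike σA A] [AddSubmonoidClass σA A] [SetLike σE E] [AddSubmonoidClass σE E]
  (𝒜 : ι → σA) (ℰ : ι → σE) [Decomposition 𝒜] [Decomposition ℰ]

theorem DirectSum.coe_decompose_smul_of_mem [AddGroup ι] [GradedSMul 𝒜 ℰ] (a : A) {j : ι}
    {x : E} (hx : x ∈ ℰ j) (i : ι) :
    (decompose ℰ (a • x) i : E) = (decompose 𝒜 a (i - j) : A) • x := by
  induction a using Decomposition.inductionOn 𝒜 with
  | zero => simp
  | @homogeneous k a =>
    have hax : (a : A) • x ∈ ℰ (k + j) := GradedSMul.smul_mem a.2 hx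
    by_cases hk : k = i - j
    · subst hk
      rw [sub_add_cancel] at hax
      rw [decompose_of_mem_same ℰ hax, decompose_of_mem_same 𝒜 a.2]
    · rw [decompose_of_mem_ne ℰ hax fun h => hk (eq_sub_of_add_eq h),
        decompose_of_mem_ne 𝒜 a.2 hk, zero_smul]
  | add a a' ha ha' =>
    simp only [add_smul, decompose_add, DirectSum.add_apply, AddMemClass.coe_add, ha, ha']

theorem Submodule.isHomogeneous_span [AddGroup ι] [GradedSMul 𝒜 ℰ] {S : Set E}
    (hS : ∀ x ∈ S, IsHomogeneousElem ℰ x) : (span A S).IsHomogeneous ℰ := by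
  classical
  intro i x hx
  induction hx using span_induction generalizing i with
  | mem x hx =>
    obtain ⟨j, hj⟩ := hS x hx
    by_cases hij : j = i
    · subst hij
      rw [decompose_of_mem_same ℰ hj]
      exact subset_span hx
    · rw [decompose_of_mem_ne ℰ hj hij]
      exact zero_mem _
  | zero => simp
  | add x y _ _ hx hy => simpa using add_mem (hx i) (hy i)
  | smul a x _ hx =>
    rw [← sum_support_decompose ℰ x, Finset.smul_sum, decompose_sum, DFinsupp.finsetSum_apply,
      AddSubmonoidClass.coe_finsetSum]
    exact sum_mem fun j _ => by
      rw [coe_decompose_smul_of_mem 𝒜 ℰ a (decompose ℰ x j).2]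
      exact smul_mem _ _ (hx j)

theorem Module.Finite.exists_finset_isHomogeneousElem_span_eq_top [Module.Finite A E] :
    ∃ s : Finset E, (∀ x ∈ s, IsHomogeneousElem ℰ x) ∧ span A (s : Set E) = ⊤ := by
  classical
  obtain ⟨t, ht⟩ := Module.Finite.fg_top (R := A) (M := E)
  refine ⟨t.biUnion fun x => (decompose ℰ x).support.image fun i => (decompose ℰ x i : E), ?_, ?_⟩
  · simp only [Finset.mem_biUnion, Finset.mem_image]
    rintro _ ⟨x, -, i, -, rfl⟩
    exact ⟨i, (decompose ℰ x i).2⟩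
  · rw [eq_top_iff, ← ht, span_le]
    intro x hx
    rw [SetLike.mem_coe, ← sum_support_decompose ℰ x]
    exact sum_mem fun i hi => subset_span <| by
      simp only [Finset.coe_biUnion, Finset.coe_image, Set.mem_iUnion, Set.mem_image]
      exact ⟨x, hx, i, hi, rfl⟩

end Decomposition

section Nakayama

variable {ι B E σ σE : Type*} [DecidableEq ι] [AddGroup ι] [CommRing B] [AddCommGroup E]
  [Module B E] [SetLike σ B] [AddSubgroupClass σ B] [SetLike σE E] [AddSubmonoidClass σE E]
  {𝒜 : ι → σ} [GradedRing 𝒜] {ℰ : ι → σE} [Decomposition ℰ] [GradedSMul 𝒜 ℰ] {I : Ideal B}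

theorem Submodule.IsHomogeneous.mem_of_mem_smul_span_singleton_sup {N : Submodule B E}
    (hN : N.IsHomogeneous ℰ) (hI : I.IsHomogeneous 𝒜)
    (hI0 : I.comap (GradeZero.subring 𝒜).subtype ≤ Ideal.jacobson ⊥) {i : ι}
    {e : E} (he : e ∈ ℰ i) (h : e ∈ I • span B {e} ⊔ N) : e ∈ N := by
  obtain ⟨_, hy, n, hn, hyn⟩ := mem_sup.1 h
  obtain ⟨a, ha, rfl⟩ := mem_smul_span_singleton.1 hy
  set c : GradeZero.subring 𝒜 := ⟨decompose 𝒜 a 0, (decompose 𝒜 a 0).2⟩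
  have hc : IsUnit (1 - (c : B)) := by
    have := (Ideal.mem_jacobson_bot.1 (hI0 (hI 0 ha : c ∈ _)) (-1)).map
      (GradeZero.subring 𝒜).subtype
    rwa [mul_neg_one, neg_add_eq_sub, map_sub, map_one] at this
  have hcomp : e = (c : B) • e + decompose ℰ n i := by
    conv_lhs => rw [← decompose_of_mem_same ℰ he, ← hyn]
    rw [decompose_add, DirectSum.add_apply, AddMemClass.coe_add, coe_decompose_smul_of_mem 𝒜 ℰ a he,
      sub_self]
  rw [← smul_mem_iff_of_isUnit N hc, sub_smul, one_smul, sub_eq_of_eq_add' hcomp]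
  exact hN i hn

theorem span_eq_top_of_span_insert_eq_top (hI : I.IsHomogeneous 𝒜)
    (hI0 : I.comap (GradeZero.subring 𝒜).subtype ≤ Ideal.jacobson ⊥)
    (hIE : I • (⊤ : Submodule B E) = ⊤) {S : Set E} (hS : ∀ x ∈ S, IsHomogeneousElem ℰ x)
    {e : E} (he : IsHomogeneousElem ℰ e) (h : span B (insert e S) = ⊤) : span B S = ⊤ := by
  obtain ⟨i, hi⟩ := he
  have he_sup : e ∈ I • span B {e} ⊔ span B S := by
    have : e ∈ I • span B (insert e S) := by rw [h, hIE]; trivial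
    rw [span_insert, smul_sup] at this
    exact (sup_le_sup_left smul_le_right _ : I • span B {e} ⊔ I • span B S ≤ _) this
  have he_span := (isHomogeneous_span 𝒜 ℰ hS).mem_of_mem_smul_span_singleton_sup hI hI0 hi he_sup
  rw [← span_insert_eq_span he_span, h]

theorem subsingleton_of_span_finset_eq_top (hI : I.IsHomogeneous 𝒜)
    (hI0 : I.comap (GradeZero.subring 𝒜).subtype ≤ Ideal.jacobson ⊥)
    (hIE : I • (⊤ : Submodule B E) = ⊤) {s : Finset E} (hs : ∀ x ∈ s, IsHomogeneousElem ℰ x)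
    (h : span B (s : Set E) = ⊤) : Subsingleton E := by
  classical
  induction s using Finset.induction_on with
  | empty =>
    rw [← Submodule.subsingleton_iff B, ← subsingleton_iff_bot_eq_top]
    simpa using h
  | insert e s _ ih =>
    rw [Finset.forall_mem_insert] at hs
    rw [Finset.coe_insert] at h
    exact ih hs.2 (span_eq_top_of_span_insert_eq_top hI hI0 hIE hs.2 hs.1 h)

end Nakayama

/-- Graded Nakayama: let `B` be a commutative ring graded by an abelian group `M`,
and let `I ⊆ B` be a homogeneous ideal such that `I₀ = I ∩ B₀` is contained in the
Jacobson radical of the subring `B₀ = 𝒜 0`. If `E` is a finitely generated `M`-graded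
`B`-module with `I • E = E` (equivalently `E ⊗_B B/I = 0`), then `E = 0`. -/
theorem graded_nakayama
    {M : Type*} [AddCommGroup M] [DecidableEq M]
    {B : Type*} [CommRing B] (𝒜 : M → AddSubgroup B) [GradedRing 𝒜]
    (I : Ideal B) (hI : Ideal.IsHomogeneous 𝒜 I)
    (hI0 : Ideal.comap ((SetLike.GradeZero.subring 𝒜).subtype : (𝒜 0) →+* B) I ≤
      Ideal.jacobson (⊥ : Ideal (𝒜 0)))
    {E : Type*} [AddCommGroup E] [Module B E]
    (ℰ : M → AddSubgroup E) [SetLike.GradedSMul 𝒜 ℰ] [DirectSum.Decomposition ℰ]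
    [Module.Finite B E]
    (hIE : I • (⊤ : Submodule B E) = ⊤) :
    Subsingleton E := by
  obtain ⟨s, hs, hspan⟩ := Module.Finite.exists_finset_isHomogeneousElem_span_eq_top (A := B) ℰ
  exact subsingleton_of_span_finset_eq_top hI hI0 hIE hs hspan
end

section
/- Let M be an additive abelian group, let B be a commutative ring with an M-grading B = ⊕_{m∈M} B_m, and let I ⊆ B be a homogeneous ideal such that I₀ := I ∩ B₀ is contained in the Jacobson radical of the subring B₀. Let E and F be finitely generated M-graded B-modules with F projective as a B-module, and let u : E → F be a graded B-linear map (i.e. u(E_m) ⊆ F_m for all m ∈ M). Then u is bijective if and only if the induced B-linear map E/IE → F/IF is bijective. -/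
/-!
Surjectivity: the image of `u` is a homogeneous submodule `P` of `F` with `F = P + I F`, and a
graded form of Nakayama's lemma gives `P = F`. Injectivity: `F` is projective, hence flat and
finitely presented, so `K = ker u` is finitely generated and `K ∩ I E = I K`; injectivity modulo
`I` gives `K ⊆ I E`, hence `K = I K`, and graded Nakayama gives `K = 0`.

Graded Nakayama needs only `I₀ ⊆ rad B₀`, not `I ⊆ rad B`: one peels off homogeneous generators
one at a time, and for a generator `x` of degree `i` with `x ∈ P + I x`, the degree-`i` component
of `x = p + a x` reads `(1 - a₀) x = pᵢ` with `a₀ ∈ I₀`, so `1 - a₀` is a unit.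
-/

open DirectSum SetLike

section GradedModule

variable {M : Type*} [DecidableEq M] {B : Type*} [Semiring B]
  {E : Type*} [AddCommGroup E] [Module B E] (ℰ : M → AddSubgroup E) [Decomposition ℰ]

theorem Submodule.IsHomogeneous.sup {P Q : Submodule B E} (hP : P.IsHomogeneous ℰ)
    (hQ : Q.IsHomogeneous ℰ) : (P ⊔ Q).IsHomogeneous ℰ := by
  intro i x hx
  obtain ⟨p, hp, q, hq, rfl⟩ := Submodule.mem_sup.1 hx
  rw [decompose_add, DirectSum.add_apply, AddSubgroup.coe_add]
  exact Submodule.add_mem_sup (hP i hp) (hQ i hq)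

theorem Submodule.IsHomogeneous.bot : (⊥ : Submodule B E).IsHomogeneous ℰ := by
  intro i x hx
  simp [(Submodule.mem_bot B).1 hx]

theorem Submodule.IsHomogeneous.exists_finset_span_eq {N : Submodule B E}
    (hN : N.IsHomogeneous ℰ) (hfg : N.FG) :
    ∃ s : Finset E, (∀ x ∈ s, IsHomogeneousElem ℰ x) ∧ Submodule.span B (s : Set E) = N := by
  classical
  obtain ⟨t, rfl⟩ := hfg
  refine ⟨t.biUnion fun y ↦ (decompose ℰ y).support.image fun i ↦ (decompose ℰ y i : E),
    ?_, le_antisymm ?_ ?_⟩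
  · simp only [Finset.mem_biUnion, Finset.mem_image]
    rintro _ ⟨y, -, i, -, rfl⟩
    exact ⟨i, (decompose ℰ y i).2⟩
  · rw [Submodule.span_le]
    intro x hx
    simp only [Finset.coe_biUnion, Finset.coe_image, Set.mem_iUnion, Set.mem_image,
      Finset.mem_coe] at hx
    obtain ⟨y, hy, i, -, rfl⟩ := hx
    exact hN i (Submodule.subset_span hy)
  · rw [Submodule.span_le]
    intro y hy
    rw [← sum_support_decompose ℰ y]
    refine Submodule.sum_mem _ fun i hi ↦ Submodule.subset_span ?_
    simp only [Finset.coe_biUnion, Finset.coe_image, Set.mem_iUnion, Set.mem_image,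
      Finset.mem_coe]
    exact ⟨y, hy, i, hi, rfl⟩

variable {F : Type*} [AddCommGroup F] [Module B F] (ℱ : M → AddSubgroup F) [Decomposition ℱ]
  {u : E →ₗ[B] F} (hu : ∀ m : M, ∀ x ∈ ℰ m, u x ∈ ℱ m)
include hu

theorem LinearMap.coe_decompose_apply_of_forall_mem (x : E) (i : M) :
    (decompose ℱ (u x) i : F) = u (decompose ℰ x i) := by
  induction x using Decomposition.inductionOn ℰ with
  | zero => simp
  | @homogeneous j x =>
    by_cases hij : j = i
    · subst hij
      rw [decompose_of_mem_same ℱ (hu j x x.2), decompose_of_mem_same ℰ x.2]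
    · rw [decompose_of_mem_ne ℱ (hu j x x.2) hij, decompose_of_mem_ne ℰ x.2 hij, map_zero]
  | add x y hx hy =>
    simp only [map_add, decompose_add, DirectSum.add_apply, AddSubgroup.coe_add, hx, hy]

theorem LinearMap.isHomogeneous_range_of_forall_mem : (range u).IsHomogeneous ℱ := by
  rintro i _ ⟨x, rfl⟩
  exact ⟨_, (coe_decompose_apply_of_forall_mem ℰ ℱ hu x i).symm⟩

theorem LinearMap.isHomogeneous_ker_of_forall_mem : (ker u).IsHomogeneous ℰ := by
  intro i x hx
  rw [mem_ker, ← coe_decompose_apply_of_forall_mem ℰ ℱ hu, mem_ker.1 hx]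
  simp

end GradedModule

section GradedNakayama

variable {M : Type*} [AddCommGroup M] [DecidableEq M]
  {B : Type*} [CommRing B] (𝒜 : M → AddSubgroup B) [GradedRing 𝒜]
  {E : Type*} [AddCommGroup E] [Module B E]
  (ℰ : M → AddSubgroup E) [GradedSMul 𝒜 ℰ] [Decomposition ℰ]

theorem coe_decompose_smul_of_right_mem (a : B) {i : M} {x : E} (hx : x ∈ ℰ i) (j : M) :
    (decompose ℰ (a • x) j : E) = (decompose 𝒜 a (j - i) : B) • x := by
  induction a using Decomposition.inductionOn 𝒜 with
  | zero => simp
  | @homogeneous k a =>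
    have hax : (a : B) • x ∈ ℰ (k + i) := GradedSMul.smul_mem a.2 hx
    by_cases hj : k + i = j
    · subst hj
      rw [decompose_of_mem_same ℰ hax, add_sub_cancel_right, decompose_of_mem_same 𝒜 a.2]
    · rw [decompose_of_mem_ne ℰ hax hj,
        decompose_of_mem_ne 𝒜 a.2 (fun h ↦ hj (by rw [h, sub_add_cancel])), zero_smul]
  | add a b ha hb =>
    simp only [add_smul, decompose_add, DirectSum.add_apply, AddSubgroup.coe_add, ha, hb]

include 𝒜 in
theorem Submodule.isHomogeneous_span_singleton {i : M} {x : E} (hx : x ∈ ℰ i) :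
    (B ∙ x).IsHomogeneous ℰ := by
  intro j y hy
  obtain ⟨a, rfl⟩ := Submodule.mem_span_singleton.1 hy
  rw [coe_decompose_smul_of_right_mem 𝒜 ℰ a hx]
  exact Submodule.smul_mem _ _ (Submodule.mem_span_singleton_self x)

variable {I : Ideal B} (hI : I.IsHomogeneous 𝒜)
  (hI0 : Ideal.comap ((GradeZero.subring 𝒜).subtype : (𝒜 0) →+* B) I ≤
    Ideal.jacobson (⊥ : Ideal (𝒜 0)))

include hI0 in
theorem isUnit_one_sub_of_mem_gradeZero {a : B} (ha : a ∈ 𝒜 0) (haI : a ∈ I) :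
    IsUnit (1 - a) := by
  set a₀ : 𝒜 0 := ⟨a, ha⟩
  have hunit : IsUnit (1 - a₀) := Ideal.isUnit_of_sub_one_mem_jacobson_bot (1 - a₀) <| by
    rw [sub_sub_cancel_left]
    exact neg_mem (hI0 haI)
  have hcoe : ((1 - a₀ : 𝒜 0) : B) = 1 - a := by
    push_cast
    rfl
  exact hcoe ▸ hunit.map (GradeZero.subring 𝒜).subtype

include hI hI0

theorem Submodule.mem_of_mem_sup_smul_span_singleton {P : Submodule B E} (hP : P.IsHomogeneous ℰ)
    {i : M} {x : E} (hx : x ∈ ℰ i) (h : x ∈ P ⊔ I • (B ∙ x)) : x ∈ P := by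
  obtain ⟨p, hp, _, hax, hpx⟩ := Submodule.mem_sup.1 h
  obtain ⟨a, haI, rfl⟩ := Submodule.mem_smul_span_singleton.1 hax
  set a₀ : B := (decompose 𝒜 a 0 : B)
  have hcomponent : x = decompose ℰ p i + a₀ • x := by
    conv_lhs => rw [← decompose_of_mem_same ℰ hx, ← hpx]
    rw [decompose_add, DirectSum.add_apply, AddSubgroup.coe_add,
      coe_decompose_smul_of_right_mem 𝒜 ℰ a hx, sub_self]
  obtain ⟨c, hc⟩ :=
    (isUnit_one_sub_of_mem_gradeZero 𝒜 hI0 (decompose 𝒜 a 0).2 (hI 0 haI)).exists_left_inv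
  have hx' : x = c • (decompose ℰ p i : E) :=
    calc x = (c * (1 - a₀)) • x := by rw [hc, one_smul]
      _ = c • (decompose ℰ p i : E) := by
          rw [mul_smul, sub_smul, one_smul, ← eq_sub_iff_add_eq.2 hcomponent.symm]
  rw [hx']
  exact P.smul_mem c (hP i hp)

theorem Submodule.span_le_of_le_sup_smul_span (s : Finset E)
    (hs : ∀ x ∈ s, IsHomogeneousElem ℰ x)
    {P : Submodule B E} (hP : P.IsHomogeneous ℰ)
    (h : span B (s : Set E) ≤ P ⊔ I • span B (s : Set E)) :
    span B (s : Set E) ≤ P := by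
  classical
  induction s using Finset.induction_on generalizing P with
  | empty => simp
  | insert x s _ ih =>
    obtain ⟨i, hx⟩ := hs x (Finset.mem_insert_self x s)
    rw [Finset.coe_insert, span_insert] at h ⊢
    have hsP : span B (s : Set E) ≤ P ⊔ B ∙ x := by
      refine ih (fun y hy ↦ hs y (Finset.mem_insert_of_mem hy))
        (hP.sup ℰ (isHomogeneous_span_singleton 𝒜 ℰ hx)) ?_
      calc span B (s : Set E) ≤ P ⊔ I • (B ∙ x ⊔ span B (s : Set E)) := le_sup_right.trans h
        _ = P ⊔ I • (B ∙ x) ⊔ I • span B (s : Set E) := by rw [smul_sup, sup_assoc]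
        _ ≤ P ⊔ B ∙ x ⊔ I • span B (s : Set E) :=
            sup_le_sup_right (sup_le_sup_left smul_le_right _) _
    have hxP : x ∈ P := by
      refine mem_of_mem_sup_smul_span_singleton 𝒜 ℰ hI hI0 hP hx ?_
      have hle : P ⊔ I • (B ∙ x ⊔ span B (s : Set E)) ≤ P ⊔ I • (B ∙ x) :=
        calc P ⊔ I • (B ∙ x ⊔ span B (s : Set E)) ≤ P ⊔ I • (P ⊔ B ∙ x) :=
              sup_le_sup_left (smul_mono le_rfl (sup_le le_sup_right hsP)) _
          _ = P ⊔ I • (B ∙ x) := by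
              rw [smul_sup, ← sup_assoc, sup_eq_left.2 (smul_le_right : I • P ≤ P)]
      exact hle (h (mem_sup_left (mem_span_singleton_self x)))
    rw [← span_singleton_le_iff_mem] at hxP
    exact sup_le hxP (hsP.trans (sup_le le_rfl hxP))

theorem Submodule.le_of_le_sup_smul_of_isHomogeneous {N P : Submodule B E}
    (hN : N.IsHomogeneous ℰ) (hfg : N.FG) (hP : P.IsHomogeneous ℰ) (h : N ≤ P ⊔ I • N) :
    N ≤ P := by
  obtain ⟨s, hs, rfl⟩ := hN.exists_finset_span_eq ℰ hfg
  exact Submodule.span_le_of_le_sup_smul_span 𝒜 ℰ hI hI0 s hs hP h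

end GradedNakayama

section QuotientBySmulTop

variable {R : Type*} [CommRing R] (I : Ideal R) {E F : Type*} [AddCommGroup E] [Module R E]
  [AddCommGroup F] [Module R F] {u : E →ₗ[R] F}

theorem bijective_mapQ_smul_top
    (h : I • (⊤ : Submodule R E) ≤ Submodule.comap u (I • ⊤))
    (hu : Function.Bijective u) :
    Function.Bijective ((I • ⊤ : Submodule R E).mapQ (I • ⊤) u h) := by
  have hmap : (I • ⊤ : Submodule R E).map u = I • ⊤ := by
    rw [Submodule.map_smul'', Submodule.map_top, LinearMap.range_eq_top.2 hu.2]
  exact (Submodule.Quotient.equiv _ _ (LinearEquiv.ofBijective u hu) hmap).bijective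

theorem sup_smul_top_eq_top_of_surjective_mapQ
    (h : I • (⊤ : Submodule R E) ≤ Submodule.comap u (I • ⊤))
    (hq : Function.Surjective ((I • ⊤ : Submodule R E).mapQ (I • ⊤) u h)) :
    LinearMap.range u ⊔ I • ⊤ = ⊤ := by
  rw [sup_comm, ← Submodule.map_mkQ_eq_top, ← Submodule.range_mapQ _ _ _ h]
  exact LinearMap.range_eq_top.2 hq

theorem ker_le_smul_top_of_injective_mapQ
    (h : I • (⊤ : Submodule R E) ≤ Submodule.comap u (I • ⊤))
    (hq : Function.Injective ((I • ⊤ : Submodule R E).mapQ (I • ⊤) u h)) :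
    LinearMap.ker u ≤ I • ⊤ := by
  intro x hx
  rw [← Submodule.Quotient.mk_eq_zero, ← hq.eq_iff, map_zero, Submodule.mapQ_apply,
    LinearMap.mem_ker.1 hx, Submodule.Quotient.mk_zero]

end QuotientBySmulTop

/-- Graded Nakayama, second form: let `B` be a commutative ring graded by an
abelian group `M`, and let `I ⊆ B` be a homogeneous ideal with `I₀ = I ∩ B₀`
contained in the Jacobson radical of the subring `B₀ = 𝒜 0`. Let `E` and `F` be
finitely generated `M`-graded `B`-modules with `F` projective over `B`, and let
`u : E → F` be a graded `B`-linear map. Then `u` is bijective if and only if the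
induced map `E/IE → F/IF` is bijective. -/
theorem graded_nakayama_bijective_iff
    {M : Type*} [AddCommGroup M] [DecidableEq M]
    {B : Type*} [CommRing B] (𝒜 : M → AddSubgroup B) [GradedRing 𝒜]
    (I : Ideal B) (hI : Ideal.IsHomogeneous 𝒜 I)
    (hI0 : Ideal.comap ((SetLike.GradeZero.subring 𝒜).subtype : (𝒜 0) →+* B) I ≤
      Ideal.jacobson (⊥ : Ideal (𝒜 0)))
    {E : Type*} [AddCommGroup E] [Module B E]
    (ℰ : M → AddSubgroup E) [SetLike.GradedSMul 𝒜 ℰ] [DirectSum.Decomposition ℰ]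
    [Module.Finite B E]
    {F : Type*} [AddCommGroup F] [Module B F]
    (ℱ : M → AddSubgroup F) [SetLike.GradedSMul 𝒜 ℱ] [DirectSum.Decomposition ℱ]
    [Module.Finite B F] [Module.Projective B F]
    (u : E →ₗ[B] F) (hu : ∀ m : M, ∀ x ∈ ℰ m, u x ∈ ℱ m) :
    Function.Bijective u ↔
      Function.Bijective (Submodule.mapQ (I • (⊤ : Submodule B E))
        (I • (⊤ : Submodule B F)) u (by
          rw [← Submodule.map_le_iff_le_comap, Submodule.map_smul'']
          exact Submodule.smul_mono le_rfl le_top)) := by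
  refine ⟨bijective_mapQ_smul_top I _, fun hq ↦ ?_⟩
  have hsurj : Function.Surjective u := by
    rw [← LinearMap.range_eq_top, eq_top_iff]
    refine Submodule.le_of_le_sup_smul_of_isHomogeneous 𝒜 ℱ hI hI0 (fun _ _ _ ↦ trivial)
      Module.Finite.fg_top (LinearMap.isHomogeneous_range_of_forall_mem ℰ ℱ hu) ?_
    rw [sup_smul_top_eq_top_of_surjective_mapQ I _ hq.2]
  have : Module.FinitePresentation B F := Module.finitePresentation_of_projective B F
  have hker : LinearMap.ker u ≤ I • LinearMap.ker u := by
    rw [← LinearMap.ker_inf_smul_top_eq_smul_of_flat I u hsurj]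
    exact le_inf le_rfl (ker_le_smul_top_of_injective_mapQ I _ hq.1)
  have hbot : LinearMap.ker u ≤ ⊥ := by
    refine Submodule.le_of_le_sup_smul_of_isHomogeneous 𝒜 ℰ hI hI0
      (LinearMap.isHomogeneous_ker_of_forall_mem ℰ ℱ hu)
      (Module.FinitePresentation.fg_ker u hsurj) (Submodule.IsHomogeneous.bot ℰ) ?_
    rwa [bot_sup_eq]
  exact ⟨LinearMap.ker_eq_bot.1 (le_bot_iff.1 hbot), hsurj⟩
end

section
/- Let M be an additive abelian group, let B be a commutative ring with an M-grading B = ⊕_{m∈M} B_m, and let I ⊆ B be a homogeneous ideal with I_m = B_m for all m ≠ 0 and such that (B₀, I₀) is a henselian pair, where I₀ := I ∩ B₀. Let E and F be finitely generated M-graded B-modules that are projective as B-modules. Then every B-linear map w : E/IE → F/IF which, for every m ∈ M, maps the image of E_m in E/IE into the image of F_m in F/IF, lifts to a graded B-linear map u : E → F inducing w on the quotients; moreover, if w is bijective, then every such lift u is bijective. -/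
/-!
Lift `w` to some `v : E →ₗ[B] F` using projectivity of `E`, then keep only its degree-preserving
part `x ↦ (v x)ₘ` for `x ∈ Eₘ`; since `I • ⊤` is homogeneous, this graded map still lifts `w`.
For bijectivity of a graded lift `u`, Nakayama's lemma yields `r ≡ 1 mod I` killing its cokernel
and its kernel (finitely generated, being a direct summand as `F` is projective). Both are graded,
so the degree-zero component `r₀` kills them as well, and `r₀ ∈ 1 + I₀` is a unit because `I₀`
lies in the Jacobson radical of the henselian pair `(B₀, I₀)`.
-/

open DirectSum

section QuotientLift

variable {B E F : Type*} [Ring B] [AddCommGroup E] [Module B E] [AddCommGroup F] [Module B F]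
  {p : Submodule B E} {q : Submodule B F} {u : E →ₗ[B] F} {w : (E ⧸ p) →ₗ[B] (F ⧸ q)}

theorem LinearMap.range_sup_eq_top_of_surjective_lift
    (hlift : ∀ x, w (Submodule.Quotient.mk x) = Submodule.Quotient.mk (u x))
    (hw : Function.Surjective w) : LinearMap.range u ⊔ q = ⊤ := by
  refine eq_top_iff.mpr fun y _ => ?_
  obtain ⟨x, hx⟩ := hw (Submodule.Quotient.mk y)
  induction x using Submodule.Quotient.induction_on with | H x => ?_
  rw [hlift, Submodule.Quotient.eq] at hx
  exact Submodule.mem_sup.mpr ⟨u x, LinearMap.mem_range_self u x, y - u x,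
    neg_sub (u x) y ▸ q.neg_mem hx, add_sub_cancel _ _⟩

theorem LinearMap.ker_le_of_injective_lift
    (hlift : ∀ x, w (Submodule.Quotient.mk x) = Submodule.Quotient.mk (u x))
    (hw : Function.Injective w) : LinearMap.ker u ≤ p := by
  intro x hx
  rw [← Submodule.Quotient.mk_eq_zero]
  apply hw
  rw [hlift, LinearMap.mem_ker.mp hx, Submodule.Quotient.mk_zero, map_zero]

theorem LinearMap.ker_inf_smul_top_le_of_comp_eq_id {s : F →ₗ[B] E} (h : u ∘ₗ s = .id)
    (I : Ideal B) : LinearMap.ker u ⊓ I • ⊤ ≤ I • LinearMap.ker u := by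
  rintro x ⟨hx, hxI⟩
  rw [LinearMap.ker_eq_range_of_comp_eq_id h, LinearMap.range_eq_map, ← Submodule.map_smul'']
  exact ⟨x, hxI, by simp [LinearMap.mem_ker.mp hx]⟩

end QuotientLift

section GradedSMul

variable {ι B N : Type*} [AddCommGroup ι] [DecidableEq ι] [Ring B]
  (𝒜 : ι → AddSubgroup B) [AddCommGroup N] [Module B N] (𝒩 : ι → AddSubgroup N)
  [SetLike.GradedSMul 𝒜 𝒩] [Decomposition 𝒩]

theorem coe_decompose_smul_add_of_left_mem {i : ι} {b : B} (hb : b ∈ 𝒜 i) (y : N) (k : ι) :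
    (decompose 𝒩 (b • y) (i + k) : N) = b • (decompose 𝒩 y k : N) := by
  induction y using Decomposition.inductionOn 𝒩 with
  | zero => simp
  | @homogeneous j z =>
    have hbz : b • (z : N) ∈ 𝒩 (i + j) := SetLike.GradedSMul.smul_mem hb z.2
    obtain rfl | hjk := eq_or_ne j k
    · rw [decompose_of_mem_same 𝒩 hbz, decompose_of_mem_same 𝒩 z.2]
    · rw [decompose_of_mem_ne 𝒩 hbz (by simpa using hjk), decompose_of_mem_ne 𝒩 z.2 hjk,
        smul_zero]
  | add y₁ y₂ h₁ h₂ =>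
    simp only [smul_add, decompose_add, DirectSum.add_apply, AddSubgroup.coe_add, h₁, h₂]

theorem coe_decompose_smul_of_left_mem {i : ι} {b : B} (hb : b ∈ 𝒜 i) (y : N) (k : ι) :
    (decompose 𝒩 (b • y) k : N) = b • (decompose 𝒩 y (k - i) : N) := by
  have := coe_decompose_smul_add_of_left_mem 𝒜 𝒩 hb y (k - i)
  rwa [add_sub_cancel] at this

end GradedSMul

section GradedModule

variable {ι B N : Type*} [AddCommGroup ι] [DecidableEq ι] [Ring B]
  (𝒜 : ι → AddSubgroup B) [GradedRing 𝒜]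
  [AddCommGroup N] [Module B N] (𝒩 : ι → AddSubgroup N)
  [SetLike.GradedSMul 𝒜 𝒩] [Decomposition 𝒩]

theorem coe_decompose_smul_of_right_mem_s7 (r : B) {k : ι} {n : N} (hn : n ∈ 𝒩 k) :
    (decompose 𝒩 (r • n) k : N) = (decompose 𝒜 r 0 : B) • n := by
  induction r using Decomposition.inductionOn 𝒜 with
  | zero => simp
  | @homogeneous i b =>
    have hbn : (b : B) • n ∈ 𝒩 (i + k) := SetLike.GradedSMul.smul_mem b.2 hn
    obtain rfl | hi := eq_or_ne i 0
    · rw [zero_add] at hbn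
      rw [decompose_of_mem_same 𝒩 hbn, decompose_of_mem_same 𝒜 b.2]
    · rw [decompose_of_mem_ne 𝒩 hbn (by simpa using hi), decompose_of_mem_ne 𝒜 b.2 hi,
        zero_smul]
  | add r₁ r₂ h₁ h₂ =>
    simp only [add_smul, decompose_add, DirectSum.add_apply, AddSubgroup.coe_add, h₁, h₂]

theorem Ideal.IsHomogeneous.smul {I : Ideal B} (hI : I.IsHomogeneous 𝒜) {p : Submodule B N}
    (hp : p.IsHomogeneous 𝒩) : (I • p).IsHomogeneous 𝒩 := by
  classical
  intro m x hx
  refine Submodule.smul_induction_on (p := fun x => (decompose 𝒩 x m : N) ∈ I • p) hx ?_ ?_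
  · intro r hr n hn
    rw [← sum_support_decompose 𝒜 r, Finset.sum_smul, decompose_sum,
      DFinsupp.finsetSum_apply, AddSubmonoidClass.coe_finsetSum]
    refine Submodule.sum_mem _ fun i _ => ?_
    rw [coe_decompose_smul_of_left_mem 𝒜 𝒩 (SetLike.coe_mem _)]
    exact Submodule.smul_mem_smul (hI i hr) (hp _ hn)
  · intro x y hx hy
    rw [decompose_add, DirectSum.add_apply, AddSubgroup.coe_add]
    exact add_mem hx hy

end GradedModule

section GradedLinearMap

variable {ι B E F : Type*} [DecidableEq ι] [Semiring B]
  [AddCommGroup E] [Module B E] (ℰ : ι → AddSubgroup E) [Decomposition ℰ]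
  [AddCommGroup F] [Module B F] (ℱ : ι → AddSubgroup F) [Decomposition ℱ]

theorem coe_decompose_map_of_graded {u : E →ₗ[B] F}
    (hu : ∀ m, ∀ x ∈ ℰ m, u x ∈ ℱ m) (x : E) (m : ι) :
    (decompose ℱ (u x) m : F) = u (decompose ℰ x m) := by
  induction x using Decomposition.inductionOn ℰ with
  | zero => simp
  | @homogeneous k z =>
    obtain rfl | hkm := eq_or_ne k m
    · rw [decompose_of_mem_same ℱ (hu k z z.2), decompose_of_mem_same ℰ z.2]
    · rw [decompose_of_mem_ne ℱ (hu k z z.2) hkm, decompose_of_mem_ne ℰ z.2 hkm, map_zero]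
  | add x₁ x₂ h₁ h₂ =>
    simp only [map_add, decompose_add, DirectSum.add_apply, AddSubgroup.coe_add, h₁, h₂]

theorem LinearMap.isHomogeneous_ker_of_graded {u : E →ₗ[B] F}
    (hu : ∀ m, ∀ x ∈ ℰ m, u x ∈ ℱ m) : (LinearMap.ker u).IsHomogeneous ℰ := by
  intro m x hx
  rw [LinearMap.mem_ker, ← coe_decompose_map_of_graded ℰ ℱ hu, LinearMap.mem_ker.mp hx]
  simp

theorem LinearMap.isHomogeneous_range_of_graded {u : E →ₗ[B] F}
    (hu : ∀ m, ∀ x ∈ ℰ m, u x ∈ ℱ m) : (LinearMap.range u).IsHomogeneous ℱ := by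
  rintro m _ ⟨x, rfl⟩
  rw [coe_decompose_map_of_graded ℰ ℱ hu]
  exact LinearMap.mem_range_self u _

end GradedLinearMap

section Nakayama

open Pointwise

variable {ι B N : Type*} [AddCommGroup ι] [DecidableEq ι] [CommRing B]
  {𝒜 : ι → AddSubgroup B} [GradedRing 𝒜] {I : Ideal B}

theorem Ideal.IsHomogeneous.isUnit_decompose_zero (hI : I.IsHomogeneous 𝒜)
    (hjac : Ideal.comap ((SetLike.GradeZero.subring 𝒜).subtype : (𝒜 0) →+* B) I ≤
      Ideal.jacobson ⊥)
    {r : B} (hr : r - 1 ∈ I) : IsUnit (decompose 𝒜 r 0 : B) := by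
  have h₀ : (decompose 𝒜 r 0 : B) - 1 ∈ I := by
    have := hI 0 hr
    rwa [decompose_sub, DirectSum.sub_apply, AddSubgroup.coe_sub,
      decompose_of_mem_same 𝒜 (SetLike.one_mem_graded 𝒜)] at this
  have hjac₀ : (decompose 𝒜 r 0 - 1 : 𝒜 0) ∈ Ideal.jacobson ⊥ :=
    hjac (show ((decompose 𝒜 r 0 - 1 : 𝒜 0) : B) ∈ I by simpa using h₀)
  exact (Ideal.isUnit_of_sub_one_mem_jacobson_bot _ hjac₀).map
    (SetLike.GradeZero.subring 𝒜).subtype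

variable [AddCommGroup N] [Module B N] {𝒩 : ι → AddSubgroup N}
  [SetLike.GradedSMul 𝒜 𝒩] [Decomposition 𝒩]

theorem Submodule.IsHomogeneous.decompose_zero_smul_mem {P Q : Submodule B N}
    (hP : P.IsHomogeneous 𝒩) (hQ : Q.IsHomogeneous 𝒩) {r : B} (hr : r • P ≤ Q) {x : N}
    (hx : x ∈ P) : (decompose 𝒜 r 0 : B) • x ∈ Q := by
  classical
  rw [← sum_support_decompose 𝒩 x, Finset.smul_sum]
  refine Submodule.sum_mem _ fun k _ => ?_
  rw [← coe_decompose_smul_of_right_mem_s7 𝒜 𝒩 r (SetLike.coe_mem _)]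
  exact hQ k (hr (Submodule.smul_mem_pointwise_smul _ r P (hP k hx)))

theorem Submodule.IsHomogeneous.le_of_le_sup_smul (hI : I.IsHomogeneous 𝒜)
    (hjac : Ideal.comap ((SetLike.GradeZero.subring 𝒜).subtype : (𝒜 0) →+* B) I ≤
      Ideal.jacobson ⊥)
    {P Q : Submodule B N} (hP : P.IsHomogeneous 𝒩) (hQ : Q.IsHomogeneous 𝒩) (hPfg : P.FG)
    (hle : P ≤ Q ⊔ I • P) : P ≤ Q := by
  obtain ⟨r, hr, hrP⟩ := Submodule.exists_sub_one_mem_and_smul_le_of_fg_of_le_sup hPfg le_rfl hle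
  obtain ⟨s, hs⟩ := (hI.isUnit_decompose_zero hjac hr).exists_left_inv
  intro x hx
  simpa [smul_smul, hs] using Q.smul_mem s (hP.decompose_zero_smul_mem (𝒜 := 𝒜) hQ hrP hx)

end Nakayama

section GradedLift

variable {ι B E F : Type*} [AddCommGroup ι] [DecidableEq ι] [Ring B]
  (𝒜 : ι → AddSubgroup B) [GradedRing 𝒜]
  [AddCommGroup E] [Module B E] (ℰ : ι → AddSubgroup E) [SetLike.GradedSMul 𝒜 ℰ] [Decomposition ℰ]
  [AddCommGroup F] [Module B F] (ℱ : ι → AddSubgroup F) [SetLike.GradedSMul 𝒜 ℱ] [Decomposition ℱ]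

def LinearMap.degreeZeroPart (v : E →ₗ[B] F) : E →ₗ[B] F where
  toFun := (toAddMonoid fun m => AddMonoidHom.mk' (fun y : ℰ m => (decompose ℱ (v y) m : F))
    fun y₁ y₂ => by simp).comp (decomposeAddEquiv ℰ).toAddMonoidHom
  map_add' := map_add _
  map_smul' b x := by
    induction x using Decomposition.inductionOn ℰ with
    | zero => simp
    | @homogeneous k z =>
      induction b using Decomposition.inductionOn 𝒜 with
      | zero => simp
      | @homogeneous i c =>
        have hcz : (c : B) • (z : E) ∈ ℰ (i + k) := SetLike.GradedSMul.smul_mem c.2 z.2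
        simp [decompose_of_mem ℰ hcz, coe_decompose_smul_add_of_left_mem 𝒜 ℱ c.2]
      | add b₁ b₂ h₁ h₂ => simp only [add_smul, map_add, h₁, h₂]
    | add x₁ x₂ h₁ h₂ => simp only [smul_add, map_add, h₁, h₂]

theorem LinearMap.degreeZeroPart_apply_of_mem (v : E →ₗ[B] F) {m : ι} {x : E} (hx : x ∈ ℰ m) :
    v.degreeZeroPart 𝒜 ℰ ℱ x = decompose ℱ (v x) m := by
  simp [LinearMap.degreeZeroPart, decompose_of_mem ℰ hx]

theorem LinearMap.degreeZeroPart_mem (v : E →ₗ[B] F) {m : ι} {x : E} (hx : x ∈ ℰ m) :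
    v.degreeZeroPart 𝒜 ℰ ℱ x ∈ ℱ m := by
  rw [v.degreeZeroPart_apply_of_mem 𝒜 ℰ ℱ hx]
  exact SetLike.coe_mem _

theorem exists_graded_lift [Module.Projective B E] {I : Ideal B} (hI : I.IsHomogeneous 𝒜)
    (w : (E ⧸ (I • ⊤ : Submodule B E)) →ₗ[B] (F ⧸ (I • ⊤ : Submodule B F)))
    (hw : ∀ m, ∀ x ∈ ℰ m, w (Submodule.Quotient.mk x) ∈
      Submodule.Quotient.mk '' (ℱ m : Set F)) :
    ∃ u : E →ₗ[B] F, (∀ m, ∀ x ∈ ℰ m, u x ∈ ℱ m) ∧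
      ∀ x, w (Submodule.Quotient.mk x) = Submodule.Quotient.mk (u x) := by
  obtain ⟨v, hv⟩ := Module.projective_lifting_property (I • ⊤ : Submodule B F).mkQ
    (w ∘ₗ (I • ⊤ : Submodule B E).mkQ) (Submodule.mkQ_surjective _)
  refine ⟨v.degreeZeroPart 𝒜 ℰ ℱ, fun m x hx => v.degreeZeroPart_mem 𝒜 ℰ ℱ hx, fun x => ?_⟩
  induction x using Decomposition.inductionOn ℰ with
  | zero => simp
  | @homogeneous m z =>
    obtain ⟨y, hy, hwz⟩ := hw m z z.2
    have hvz : v z - y ∈ (I • ⊤ : Submodule B F) := by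
      rw [← Submodule.Quotient.eq, hwz]
      exact LinearMap.congr_fun hv z
    have hIF : (I • ⊤ : Submodule B F).IsHomogeneous ℱ :=
      hI.smul 𝒜 ℱ fun _ _ _ => Submodule.mem_top
    have hcomp := hIF m hvz
    rw [decompose_sub, DirectSum.sub_apply, AddSubgroup.coe_sub, decompose_of_mem_same ℱ hy,
      ← v.degreeZeroPart_apply_of_mem 𝒜 ℰ ℱ z.2, ← Submodule.Quotient.eq] at hcomp
    rw [← hwz, hcomp]
  | add x₁ x₂ h₁ h₂ => simp only [Submodule.Quotient.mk_add, map_add, h₁, h₂]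

end GradedLift

section Bijective

variable {ι B E F : Type*} [AddCommGroup ι] [DecidableEq ι] [CommRing B]
  {𝒜 : ι → AddSubgroup B} [GradedRing 𝒜] {I : Ideal B}
  [AddCommGroup E] [Module B E] {ℰ : ι → AddSubgroup E} [Decomposition ℰ]
  [AddCommGroup F] [Module B F] {ℱ : ι → AddSubgroup F} [Decomposition ℱ]
  {u : E →ₗ[B] F}

theorem surjective_of_graded_of_range_sup_smul_top_eq_top [SetLike.GradedSMul 𝒜 ℱ]
    [Module.Finite B F]
    (hI : I.IsHomogeneous 𝒜)
    (hjac : Ideal.comap ((SetLike.GradeZero.subring 𝒜).subtype : (𝒜 0) →+* B) I ≤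
      Ideal.jacobson ⊥)
    (hu : ∀ m, ∀ x ∈ ℰ m, u x ∈ ℱ m) (hrange : LinearMap.range u ⊔ I • ⊤ = ⊤) :
    Function.Surjective u := by
  rw [← LinearMap.range_eq_top, eq_top_iff]
  exact Submodule.IsHomogeneous.le_of_le_sup_smul hI hjac (fun _ _ _ => Submodule.mem_top)
    (LinearMap.isHomogeneous_range_of_graded ℰ ℱ hu) Module.Finite.fg_top hrange.ge

theorem injective_of_graded_of_ker_le_smul_top [SetLike.GradedSMul 𝒜 ℰ] [Module.Finite B E]
    [Module.Projective B F]
    (hI : I.IsHomogeneous 𝒜)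
    (hjac : Ideal.comap ((SetLike.GradeZero.subring 𝒜).subtype : (𝒜 0) →+* B) I ≤
      Ideal.jacobson ⊥)
    (hu : ∀ m, ∀ x ∈ ℰ m, u x ∈ ℱ m) (hsurj : Function.Surjective u)
    (hker : LinearMap.ker u ≤ I • ⊤) : Function.Injective u := by
  obtain ⟨s, hs⟩ := Module.projective_lifting_property u LinearMap.id hsurj
  have hfg : (LinearMap.ker u).FG := by
    rw [LinearMap.ker_eq_range_of_comp_eq_id hs, LinearMap.range_eq_map]
    exact Module.Finite.fg_top.map _
  have hbot : (⊥ : Submodule B E).IsHomogeneous ℰ := fun _ _ hx => by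
    simp [(Submodule.mem_bot B).mp hx]
  rw [← LinearMap.ker_eq_bot, eq_bot_iff]
  refine Submodule.IsHomogeneous.le_of_le_sup_smul hI hjac
    (LinearMap.isHomogeneous_ker_of_graded ℰ ℱ hu) hbot hfg ?_
  rw [bot_sup_eq]
  exact (le_inf le_rfl hker).trans (LinearMap.ker_inf_smul_top_le_of_comp_eq_id hs I)

end Bijective

theorem graded_henselian_lifting_general
    {M : Type*} [AddCommGroup M] [DecidableEq M]
    {B : Type*} [CommRing B] (𝒜 : M → AddSubgroup B) [GradedRing 𝒜]
    (I : Ideal B) (hI : Ideal.IsHomogeneous 𝒜 I)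
    (hHens : HenselianRing (𝒜 0)
      (Ideal.comap ((SetLike.GradeZero.subring 𝒜).subtype : (𝒜 0) →+* B) I))
    {E : Type*} [AddCommGroup E] [Module B E]
    (ℰ : M → AddSubgroup E) [SetLike.GradedSMul 𝒜 ℰ] [DirectSum.Decomposition ℰ]
    [Module.Finite B E] [Module.Projective B E]
    {F : Type*} [AddCommGroup F] [Module B F]
    (ℱ : M → AddSubgroup F) [SetLike.GradedSMul 𝒜 ℱ] [DirectSum.Decomposition ℱ]
    [Module.Finite B F] [Module.Projective B F]
    (w : (E ⧸ (I • (⊤ : Submodule B E))) →ₗ[B] (F ⧸ (I • (⊤ : Submodule B F))))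
    (hw : ∀ m : M, ∀ x ∈ ℰ m, w (Submodule.Quotient.mk x) ∈
      Submodule.Quotient.mk '' (ℱ m : Set F)) :
    (∃ u : E →ₗ[B] F, (∀ m : M, ∀ x ∈ ℰ m, u x ∈ ℱ m) ∧
        ∀ x : E, w (Submodule.Quotient.mk x) = Submodule.Quotient.mk (u x)) ∧
      (Function.Bijective w →
        ∀ u : E →ₗ[B] F, (∀ m : M, ∀ x ∈ ℰ m, u x ∈ ℱ m) →
          (∀ x : E, w (Submodule.Quotient.mk x) = Submodule.Quotient.mk (u x)) →
          Function.Bijective u) := by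
  refine ⟨exists_graded_lift 𝒜 ℰ ℱ hI w hw, fun hbij u hu hlift => ?_⟩
  have hsurj := surjective_of_graded_of_range_sup_smul_top_eq_top hI hHens.jac hu
    (LinearMap.range_sup_eq_top_of_surjective_lift hlift hbij.2)
  exact ⟨injective_of_graded_of_ker_le_smul_top hI hHens.jac hu hsurj
    (LinearMap.ker_le_of_injective_lift hlift hbij.1), hsurj⟩

/-- Lifting along a henselian pair for graded projective modules: let `B` be a
commutative ring graded by an abelian group `M`, let `I ⊆ B` be a homogeneous ideal
with `I_m = B_m` for all `m ≠ 0` and such that `(B₀, I₀)` is a henselian pair, where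
`B₀ = 𝒜 0` and `I₀ = I ∩ B₀`. Let `E` and `F` be finitely generated `M`-graded
`B`-modules that are projective as `B`-modules. Then every `B`-linear map
`w : E/IE → F/IF` mapping the image of `E_m` into the image of `F_m` for all `m`
lifts to a graded `B`-linear map `u : E → F` inducing `w`; moreover, if `w` is
bijective then every such lift `u` is bijective. -/
theorem graded_henselian_lifting
    {M : Type*} [AddCommGroup M] [DecidableEq M]
    {B : Type*} [CommRing B] (𝒜 : M → AddSubgroup B) [GradedRing 𝒜]
    (I : Ideal B) (hI : Ideal.IsHomogeneous 𝒜 I)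
    (hIm : ∀ m : M, m ≠ 0 → ∀ x : B, x ∈ 𝒜 m → x ∈ I)
    (hHens : HenselianRing (𝒜 0)
      (Ideal.comap ((SetLike.GradeZero.subring 𝒜).subtype : (𝒜 0) →+* B) I))
    {E : Type*} [AddCommGroup E] [Module B E]
    (ℰ : M → AddSubgroup E) [SetLike.GradedSMul 𝒜 ℰ] [DirectSum.Decomposition ℰ]
    [Module.Finite B E] [Module.Projective B E]
    {F : Type*} [AddCommGroup F] [Module B F]
    (ℱ : M → AddSubgroup F) [SetLike.GradedSMul 𝒜 ℱ] [DirectSum.Decomposition ℱ]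
    [Module.Finite B F] [Module.Projective B F]
    (w : (E ⧸ (I • (⊤ : Submodule B E))) →ₗ[B] (F ⧸ (I • (⊤ : Submodule B F))))
    (hw : ∀ m : M, ∀ x ∈ ℰ m, w (Submodule.Quotient.mk x) ∈
      Submodule.Quotient.mk '' (ℱ m : Set F)) :
    (∃ u : E →ₗ[B] F, (∀ m : M, ∀ x ∈ ℰ m, u x ∈ ℱ m) ∧
        ∀ x : E, w (Submodule.Quotient.mk x) = Submodule.Quotient.mk (u x)) ∧
      (Function.Bijective w →
        ∀ u : E →ₗ[B] F, (∀ m : M, ∀ x ∈ ℰ m, u x ∈ ℱ m) →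
          (∀ x : E, w (Submodule.Quotient.mk x) = Submodule.Quotient.mk (u x)) →
          Function.Bijective u) :=
  graded_henselian_lifting_general 𝒜 I hI hHens ℰ ℱ w hw
end

section
/- Let f : X ⟶ Y be a morphism of schemes that is flat, surjective and universally open. Then for every affine scheme Z and every morphism of schemes h : Z ⟶ Y there exist a scheme Z′, a morphism p : Z′ ⟶ Z that is flat, surjective and quasi-compact, and a morphism q : Z′ ⟶ X such that f ∘ q = h ∘ p. -/
open AlgebraicGeometry CategoryTheory

universe u

/-- A morphism of schemes is *flat* if all of the induced maps on stalks are flat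
ring homomorphisms. -/
def SchemeHomFlat {X Y : Scheme.{u}} (f : X ⟶ Y) : Prop :=
  ∀ x, RingHom.Flat (f.stalkMap x).hom

/-- A morphism of schemes is *universally open* if every base change of it is an
open map on underlying topological spaces. -/
def SchemeHomUniversallyOpen {X Y : Scheme.{u}} (f : X ⟶ Y) : Prop :=
  (AlgebraicGeometry.topologically @IsOpenMap).universally f

/-! The base change `W := Z ×_Y X ⟶ Z` of `f` is flat, surjective and open. As `Z` is
quasi-compact and the quasi-compact opens of `W` form a basis, finitely many of them already map
onto `Z`; restricting to their union `V` gives `p`, and `q` is the other projection. -/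

open Limits

namespace AlgebraicGeometry

lemma schemeHomFlat_iff_flat {X Y : Scheme.{u}} (f : X ⟶ Y) : SchemeHomFlat f ↔ Flat f :=
  (Flat.iff_flat_stalkMap f).symm

lemma schemeHomUniversallyOpen_iff_universallyOpen {X Y : Scheme.{u}} (f : X ⟶ Y) :
    SchemeHomUniversallyOpen f ↔ UniversallyOpen f := by
  rw [UniversallyOpen.eq]
  rfl

lemma Scheme.Hom.exists_opens_surjective_quasiCompact_restrict {W Z : Scheme.{u}} [IsAffine Z]
    (g : W ⟶ Z) [Surjective g] (hg : IsOpenMap g.base) :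
    ∃ V : W.Opens, Surjective (V.ι ≫ g) ∧ QuasiCompact (V.ι ≫ g) := by
  obtain ⟨V, hVc, hVg⟩ := hg.exists_opens_image_eq_of_prespectralSpace g.continuous
    (by simp) isOpen_univ isCompact_univ
  refine ⟨V, ⟨fun z ↦ ?_⟩,
    (quasiCompact_iff_compactSpace _).mpr (isCompact_iff_compactSpace.mp hVc)⟩
  obtain ⟨w, hwV, rfl⟩ := hVg.ge (Set.mem_univ z)
  exact ⟨⟨w, hwV⟩, rfl⟩

end AlgebraicGeometry

/-- A flat, surjective and universally open morphism of schemes `f : X ⟶ Y` is an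
fpqc covering: for every affine scheme `Z` and every morphism `h : Z ⟶ Y` there are
a scheme `Z'`, a flat, surjective and quasi-compact morphism `p : Z' ⟶ Z` and a
morphism `q : Z' ⟶ X` with `f ∘ q = h ∘ p`. -/
theorem flat_universallyOpen_surjective_is_fpqc_covering
    {X Y : Scheme.{u}} (f : X ⟶ Y)
    (hflat : SchemeHomFlat f) (hsurj : Function.Surjective f.base)
    (hopen : SchemeHomUniversallyOpen f)
    (Z : Scheme.{u}) [IsAffine Z] (h : Z ⟶ Y) :
    ∃ (Z' : Scheme.{u}) (p : Z' ⟶ Z) (q : Z' ⟶ X),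
      SchemeHomFlat p ∧ Function.Surjective p.base ∧ QuasiCompact p ∧
        q ≫ f = p ≫ h := by
  have : Flat f := (schemeHomFlat_iff_flat f).mp hflat
  have : Surjective f := ⟨hsurj⟩
  have : UniversallyOpen f := (schemeHomUniversallyOpen_iff_universallyOpen f).mp hopen
  obtain ⟨V, hVsurj, hVqc⟩ := (pullback.fst h f).exists_opens_surjective_quasiCompact_restrict
    (pullback.fst h f).isOpenMap
  refine ⟨V, V.ι ≫ pullback.fst h f, V.ι ≫ pullback.snd h f,
    (schemeHomFlat_iff_flat _).mpr inferInstance, hVsurj.surj, hVqc, ?_⟩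
  simp [pullback.condition]
end
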